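/- arXiv:1212.5576 — 4 statements merged into one kernel-verified Lean document; each statement's English description precedes it below -/
import Mathlib

section
/- (Lemma on Z^V, generalizing Lemma 2 of Odell–Schlumprecht–Zsák:) Let V be a Banach space with a normalized 1-unconditional basis (v_n) which satisfies subsequential C-V-lower block estimates in itself, and let Z be a Banach space with FDD (E_n). Then (E_n) satisfies subsequential 2C-V-lower block estimates in Z^V; concretely: if (z_n) is a sequence of nonzero finitely supported vectors of Z with max supp z_n < min supp z_{n+1} and ‖z_n‖_{Z^V} = 1 for all n, and m_n = min supp z_n, then ‖Σ a_n v_{m_n}‖_V ≤ 2C · ‖Σ a_n z_n‖_{Z^V} for every finitely supported real sequence (a_n). -/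
open Filter Topology Metric

noncomputable section

/-! ### Finite dimensional decompositions (indexed by `ℕ`) -/

/-- A finite dimensional decomposition of `Z`: nonzero finite-dimensional subspaces `E n`
such that every `z` has a unique norm-convergent representation `z = Σ_n z_n`, `z_n ∈ E n`,
together with the (automatically continuous) coordinate projections. -/
structure FDD (Z : Type*) [NormedAddCommGroup Z] [NormedSpace ℝ Z] where
  E : ℕ → Submodule ℝ Z
  nontrivial : ∀ n, E n ≠ ⊥
  finiteDim : ∀ n, FiniteDimensional ℝ (E n)
  proj : ℕ → Z →L[ℝ] Z
  proj_mem : ∀ n z, proj n z ∈ E n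
  proj_sum : ∀ z : Z,
    Filter.Tendsto (fun N => ∑ n ∈ Finset.range N, proj n z) Filter.atTop (nhds z)
  rep_unique : ∀ (z : Z) (f : ℕ → Z), (∀ n, f n ∈ E n) →
    Filter.Tendsto (fun N => ∑ n ∈ Finset.range N, f n) Filter.atTop (nhds z) →
    ∀ n, f n = proj n z

namespace FDD

variable {Z : Type*} [NormedAddCommGroup Z] [NormedSpace ℝ Z] (F : FDD Z)

/-- The support of a vector with respect to an FDD. -/
def supp (z : Z) : Set ℕ := {n | F.proj n z ≠ 0}

/-- The minimum of the support. -/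
def minSupp (z : Z) : ℕ := sInf (F.supp z)

/-- The maximum of the support. -/
def maxSupp (z : Z) : ℕ := sSup (F.supp z)

/-- A block sequence with respect to an FDD: nonzero, finitely supported vectors with
successive supports. -/
def IsBlockSeq (z : ℕ → Z) : Prop :=
  (∀ n, z n ≠ 0) ∧ (∀ n, (F.supp (z n)).Finite) ∧
    ∀ n, ∀ i ∈ F.supp (z n), ∀ j ∈ F.supp (z (n + 1)), i < j

/-- Bimonotonicity: all interval projections have norm at most one. -/
def Bimonotone : Prop := ∀ a b : ℕ, ‖∑ i ∈ Finset.Icc a b, F.proj i‖ ≤ 1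

/-- A shrinking FDD. -/
def Shrinking : Prop :=
  ∀ f : Z →L[ℝ] ℝ,
    Filter.Tendsto
      (fun N => ‖f.comp (ContinuousLinearMap.id ℝ Z - ∑ i ∈ Finset.range N, F.proj i)‖)
      Filter.atTop (nhds 0)

/-- A boundedly-complete FDD. -/
def BoundedlyComplete : Prop :=
  ∀ f : ℕ → Z, (∀ n, f n ∈ F.E n) →
    BddAbove (Set.range fun N => ‖∑ n ∈ Finset.range N, f n‖) →
    ∃ z : Z, Filter.Tendsto (fun N => ∑ n ∈ Finset.range N, f n) Filter.atTop (nhds z)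

end FDD

/-- `(x_n)` is `C`-dominated by `(y_n)`. -/
def DominatedBy {X : Type*} {Y : Type*} [NormedAddCommGroup X] [Module ℝ X]
    [NormedAddCommGroup Y] [Module ℝ Y] (C : ℝ) (x : ℕ → X) (y : ℕ → Y) : Prop :=
  ∀ a : ℕ →₀ ℝ, ‖a.sum fun n r => r • x n‖ ≤ C * ‖a.sum fun n r => r • y n‖

/-- Upper block estimates, with constant `C`, with respect to a sequence `w`. -/
def FDD.UpperBlockEst {Z V : Type*} [NormedAddCommGroup Z] [NormedSpace ℝ Z]
    [NormedAddCommGroup V] [Module ℝ V] (F : FDD Z) (w : ℕ → V) (C : ℝ) : Prop :=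
  ∀ z : ℕ → Z, F.IsBlockSeq z → (∀ n, ‖z n‖ = 1) →
    DominatedBy C z fun n => w (F.minSupp (z n))

/-- Lower block estimates, with constant `C`, with respect to a sequence `w`. -/
def FDD.LowerBlockEst {Z V : Type*} [NormedAddCommGroup Z] [NormedSpace ℝ Z]
    [NormedAddCommGroup V] [Module ℝ V] (F : FDD Z) (w : ℕ → V) (C : ℝ) : Prop :=
  ∀ z : ℕ → Z, F.IsBlockSeq z → (∀ n, ‖z n‖ = 1) →
    DominatedBy C (fun n => w (F.minSupp (z n))) z

/-! ### Schauder bases -/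

/-- A Schauder basis of `V`, bundled with its (automatically continuous) coordinate
functionals. -/
structure RSchauderBasis (V : Type*) [NormedAddCommGroup V] [NormedSpace ℝ V] where
  v : ℕ → V
  coord : ℕ → V →L[ℝ] ℝ
  biorth : ∀ n m, coord n (v m) = if n = m then (1 : ℝ) else 0
  expand : ∀ x : V,
    Filter.Tendsto (fun N => ∑ n ∈ Finset.range N, coord n x • v n) Filter.atTop (nhds x)

/-- A block sequence of basis vectors, described by its (finitely supported) coefficients:
nonzero with successive supports. -/
def IsCoeffBlockSeq (a : ℕ → ℕ →₀ ℝ) : Prop :=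
  (∀ n, a n ≠ 0) ∧ ∀ n, ∀ i ∈ (a n).support, ∀ j ∈ (a (n + 1)).support, i < j

namespace RSchauderBasis

variable {V : Type*} [NormedAddCommGroup V] [NormedSpace ℝ V] (B : RSchauderBasis V)

/-- The vector `Σ_n a_n v_n` for finitely supported coefficients. -/
def vec (a : ℕ →₀ ℝ) : V := a.sum fun n r => r • B.v n

/-- The basis is normalized. -/
def Normalized : Prop := ∀ n, ‖B.v n‖ = 1

/-- The basis is `1`-unconditional. -/
def Unconditional : Prop :=
  ∀ a b : ℕ →₀ ℝ, (∀ n, |a n| ≤ |b n|) → ‖B.vec a‖ ≤ ‖B.vec b‖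

/-- The basis is shrinking. -/
def Shrinking : Prop :=
  ∀ f : V →L[ℝ] ℝ,
    Filter.Tendsto
      (fun N => sSup {r : ℝ | ∃ x ∈ closure (Submodule.span ℝ (B.v '' Set.Ici N) : Set V),
        ‖x‖ ≤ 1 ∧ r = |f x|})
      Filter.atTop (nhds 0)

/-- `D`-right dominance. -/
def RightDominant (D : ℝ) : Prop :=
  ∀ k l : ℕ → ℕ, StrictMono k → StrictMono l → (∀ n, k n ≤ l n) →
    DominatedBy D (fun n => B.v (k n)) fun n => B.v (l n)


/-- The basis satisfies subsequential `C`-`V`-upper block estimates in `V` itself. -/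
def UpperBlockEstSelf (C : ℝ) : Prop :=
  ∀ a : ℕ → ℕ →₀ ℝ, ∀ h : IsCoeffBlockSeq a, (∀ n, ‖B.vec (a n)‖ = 1) →
    DominatedBy C (fun n => B.vec (a n)) fun n =>
      B.v ((a n).support.min' (Finsupp.support_nonempty_iff.mpr (h.1 n)))

/-- The basis satisfies subsequential `C`-`V`-lower block estimates in `V` itself. -/
def LowerBlockEstSelf (C : ℝ) : Prop :=
  ∀ a : ℕ → ℕ →₀ ℝ, ∀ h : IsCoeffBlockSeq a, (∀ n, ‖B.vec (a n)‖ = 1) →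
    DominatedBy C
      (fun n => B.v ((a n).support.min' (Finsupp.support_nonempty_iff.mpr (h.1 n))))
      fun n => B.vec (a n)

end RSchauderBasis


/-- The `Z^V` norm of a (finitely supported) vector of `Z`. -/
def ZVnorm {V : Type*} [NormedAddCommGroup V] [NormedSpace ℝ V]
    {Z : Type*} [NormedAddCommGroup Z] [NormedSpace ℝ Z]
    (B : RSchauderBasis V) (F : FDD Z) (z : Z) : ℝ :=
  sSup {r : ℝ | ∃ (n : ℕ) (m : ℕ → ℕ), StrictMono m ∧
    r = ‖∑ i ∈ Finset.range n,
          ‖∑ j ∈ Finset.Ico (m i) (m (i + 1)), F.proj j z‖ • B.v (m i)‖}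

/-!
For each `z n` choose a blocking whose `V`-vector has norm greater than `θ < 1`. Its first cut can
be moved to `min supp z n` at the cost of a factor `2`, and its last cut to `min supp z (n + 1)` at
no cost. These blockings, with coefficient vectors `c n`, concatenate to a blocking of
`Σ a n • z n` with coefficient vector `Σ |a n| • c n`. Applying the lower estimate in `V` to the
normalized blocks `c n / ‖c n‖`, whose supports start at `min supp z n`, gives
`θ ‖Σ a n • v (min supp z n)‖ ≤ 2C ‖Σ a n • z n‖_{Z^V}`; let `θ → 1`.
-/

theorem le_of_forall_mul_le_of_lt_one {L R : ℝ} (h : ∀ θ ∈ Set.Ioo (0 : ℝ) 1, θ * L ≤ R) :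
    L ≤ R := by
  have hlim : Tendsto (fun θ : ℝ => θ * L) (𝓝[<] 1) (𝓝 L) :=
    ((continuous_id.mul continuous_const).tendsto' 1 L (one_mul L)).mono_left nhdsWithin_le_nhds
  exact le_of_tendsto hlim (Filter.mem_of_superset (Ioo_mem_nhdsLT one_pos) h)

theorem sum_range_sum_Ico_consecutive {M : Type*} [AddCommMonoid M] (f : ℕ → M) {m : ℕ → ℕ}
    (hm : Monotone m) (k : ℕ) :
    ∑ i ∈ Finset.range k, ∑ j ∈ Finset.Ico (m i) (m (i + 1)), f j =
      ∑ j ∈ Finset.Ico (m 0) (m k), f j := by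
  induction k with
  | zero => simp
  | succ k ih =>
    rw [Finset.sum_range_succ, ih, Finset.sum_Ico_consecutive _ (hm k.zero_le) (hm k.le_succ)]

def concatCuts (m₁ : ℕ → ℕ) (k₁ : ℕ) (m₂ : ℕ → ℕ) (i : ℕ) : ℕ :=
  if i ≤ k₁ then m₁ i else m₂ (i - k₁)

theorem concatCuts_of_le {m₁ m₂ : ℕ → ℕ} {k₁ i : ℕ} (h : m₁ k₁ = m₂ 0) (hi : k₁ ≤ i) :
    concatCuts m₁ k₁ m₂ i = m₂ (i - k₁) := by
  unfold concatCuts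
  split_ifs with hi'
  · obtain rfl : i = k₁ := le_antisymm hi' hi
    simpa using h
  · rfl

theorem strictMono_concatCuts {m₁ m₂ : ℕ → ℕ} (hm₁ : StrictMono m₁) (hm₂ : StrictMono m₂)
    {k₁ : ℕ} (h : m₁ k₁ = m₂ 0) : StrictMono (concatCuts m₁ k₁ m₂) := by
  refine strictMono_nat_of_lt_succ fun i => ?_
  rcases lt_or_ge i k₁ with hi | hi
  · simp only [concatCuts, if_pos hi.le, if_pos (Nat.succ_le_of_lt hi)]
    exact hm₁ i.lt_succ_self
  · rw [concatCuts_of_le h hi, concatCuts_of_le h (hi.trans i.le_succ)]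
    exact hm₂ (by omega)

namespace FDD

variable {Z : Type*} [NormedAddCommGroup Z] [NormedSpace ℝ Z] (F : FDD Z)

theorem proj_proj (i j : ℕ) (z : Z) :
    F.proj j (F.proj i z) = if j = i then F.proj i z else 0 := by
  refine (F.rep_unique (F.proj i z) (fun n => if n = i then F.proj i z else 0) ?_ ?_ j).symm
  · intro n
    split_ifs with h
    · exact h ▸ F.proj_mem n z
    · exact Submodule.zero_mem _
  · refine tendsto_const_nhds.congr' ?_
    filter_upwards [eventually_gt_atTop i] with N hN
    rw [Finset.sum_ite_eq' (Finset.range N) i, if_pos (Finset.mem_range.mpr hN)]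

theorem eq_zero_of_forall_proj_eq_zero {z : Z} (h : ∀ j, F.proj j z = 0) : z = 0 :=
  tendsto_nhds_unique (F.proj_sum z) (by simp [h])

theorem proj_minSupp_ne_zero {z : Z} (hz : z ≠ 0) : F.proj (F.minSupp z) z ≠ 0 := by
  refine Nat.sInf_mem (s := F.supp z) ?_
  by_contra h
  exact hz (F.eq_zero_of_forall_proj_eq_zero fun j => not_not.mp fun hj => h ⟨j, hj⟩)

theorem proj_eq_zero_of_lt_minSupp {z : Z} {j : ℕ} (hj : j < F.minSupp z) :
    F.proj j z = 0 :=
  not_not.mp (Nat.notMem_of_lt_sInf hj)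

def projIco (a b : ℕ) : Z →L[ℝ] Z := ∑ j ∈ Finset.Ico a b, F.proj j

theorem projIco_apply (a b : ℕ) (z : Z) :
    F.projIco a b z = ∑ j ∈ Finset.Ico a b, F.proj j z :=
  sum_apply _ _ _

theorem proj_projIco {a b j : ℕ} (hj : j ∈ Finset.Ico a b) (z : Z) :
    F.proj j (F.projIco a b z) = F.proj j z := by
  simp [projIco_apply, map_sum, proj_proj, hj]

theorem projIco_eq_zero {a b : ℕ} {z : Z} (h : ∀ j ∈ Finset.Ico a b, F.proj j z = 0) :
    F.projIco a b z = 0 := by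
  rw [projIco_apply]
  exact Finset.sum_eq_zero h

theorem projIco_eq_projIco {a b a' b' : ℕ} (ha : a ≤ a') (hb : b' ≤ b) {z : Z}
    (h : ∀ j ∈ Finset.Ico a b, j ∉ Finset.Ico a' b' → F.proj j z = 0) :
    F.projIco a' b' z = F.projIco a b z := by
  rw [projIco_apply, projIco_apply]
  exact Finset.sum_subset (Finset.Ico_subset_Ico ha hb) h

/-- The coefficients `‖P_[m i, m (i+1)) z‖`, placed at `m i`, of the `V`-vector that the
blocking `m 0 < ⋯ < m k` assigns to `z` in the definition of the `Z^V`-norm. -/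
def blockNorms (z : Z) (k : ℕ) (m : ℕ → ℕ) : ℕ →₀ ℝ :=
  ∑ i ∈ Finset.range k, Finsupp.single (m i) ‖F.projIco (m i) (m (i + 1)) z‖

variable {F}

theorem blockNorms_nonneg (z : Z) (k : ℕ) (m : ℕ → ℕ) : 0 ≤ F.blockNorms z k m :=
  Finset.sum_nonneg fun _ _ => Finsupp.single_nonneg.mpr (norm_nonneg _)

theorem blockNorms_apply {m : ℕ → ℕ} (hm : StrictMono m) (z : Z) {i k : ℕ} (hi : i < k) :
    F.blockNorms z k m (m i) = ‖F.projIco (m i) (m (i + 1)) z‖ := by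
  rw [blockNorms, Finsupp.finsetSum_apply, Finset.sum_eq_single i]
  · exact Finsupp.single_eq_same
  · exact fun i' _ hi' => Finsupp.single_eq_of_ne (hm.injective.ne hi'.symm)
  · exact fun h => absurd (Finset.mem_range.mpr hi) h

theorem apply_zero_mem_support_blockNorms {m : ℕ → ℕ} (hm : StrictMono m) {z : Z} {k : ℕ}
    (hk : 0 < k) (hz : F.proj (m 0) z ≠ 0) : m 0 ∈ (F.blockNorms z k m).support := by
  rw [Finsupp.mem_support_iff, blockNorms_apply hm z hk, norm_ne_zero_iff, zero_add]
  intro h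
  rw [← F.proj_projIco (Finset.mem_Ico.mpr ⟨le_rfl, hm zero_lt_one⟩), h, map_zero] at hz
  exact hz rfl

theorem blockNorms_length_add (z : Z) (k l : ℕ) (m : ℕ → ℕ) :
    F.blockNorms z (k + l) m = F.blockNorms z k m + F.blockNorms z l (fun i => m (k + i)) := by
  simp only [blockNorms, Finset.sum_range_add, add_assoc]

theorem blockNorms_congr (z : Z) {k : ℕ} {m m' : ℕ → ℕ} (h : ∀ i ≤ k, m i = m' i) :
    F.blockNorms z k m = F.blockNorms z k m' :=
  Finset.sum_congr rfl fun i hi => by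
    have hi := Finset.mem_range.mp hi
    rw [h i hi.le, h (i + 1) hi]

theorem blockNorms_smul (r : ℝ) (z : Z) (k : ℕ) (m : ℕ → ℕ) :
    F.blockNorms (r • z) k m = |r| • F.blockNorms z k m := by
  simp only [blockNorms, map_smul, norm_smul, Real.norm_eq_abs, Finset.smul_sum,
    Finsupp.smul_single, smul_eq_mul]

theorem blockNorms_add_of_proj_eq_zero {m : ℕ → ℕ} (hm : Monotone m) (y : Z) {w : Z} {k : ℕ}
    (hw : ∀ j ∈ Finset.Ico (m 0) (m k), F.proj j w = 0) :
    F.blockNorms (y + w) k m = F.blockNorms y k m :=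
  Finset.sum_congr rfl fun i hi => by
    have hi := Finset.mem_range.mp hi
    have hPw : F.projIco (m i) (m (i + 1)) w = 0 := F.projIco_eq_zero fun j hj =>
      hw j (Finset.Ico_subset_Ico (hm i.zero_le) (hm hi) hj)
    rw [map_add, hPw, add_zero]

theorem blockNorms_eq_zero {m : ℕ → ℕ} (hm : Monotone m) {z : Z} {k : ℕ}
    (hz : ∀ j ∈ Finset.Ico (m 0) (m k), F.proj j z = 0) : F.blockNorms z k m = 0 := by
  simpa [blockNorms] using blockNorms_add_of_proj_eq_zero hm 0 hz

theorem blockNorms_one (z : Z) (m : ℕ → ℕ) :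
    F.blockNorms z 1 m = Finsupp.single (m 0) ‖F.projIco (m 0) (m 1) z‖ := by
  simp [blockNorms]

theorem mem_support_blockNorms {m : ℕ → ℕ} (hm : Monotone m) {z : Z} {q : ℕ}
    (hq : ∀ j, q ≤ j → F.proj j z = 0) {k j : ℕ} (hj : j ∈ (F.blockNorms z k m).support) :
    m 0 ≤ j ∧ j < q := by
  rw [Finsupp.mem_support_iff, blockNorms, Finsupp.finsetSum_apply] at hj
  obtain ⟨i, -, hi⟩ := Finset.exists_ne_zero_of_sum_ne_zero hj
  obtain rfl : m i = j := by
    by_contra h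
    exact hi (Finsupp.single_eq_of_ne (Ne.symm h))
  rw [Finsupp.single_eq_same] at hi
  obtain ⟨j', hj'I, hj'⟩ : ∃ j' ∈ Finset.Ico (m i) (m (i + 1)), F.proj j' z ≠ 0 := by
    by_contra! h
    exact hi (by rw [F.projIco_eq_zero h, norm_zero])
  have hj'q : j' < q := not_le.mp fun h => hj' (hq j' h)
  have := Finset.mem_Ico.mp hj'I
  exact ⟨hm i.zero_le, by omega⟩

theorem min'_support_blockNorms {m : ℕ → ℕ} (hm : StrictMono m) {z : Z} {q : ℕ}
    (hq : ∀ j, q ≤ j → F.proj j z = 0) {k : ℕ} (hk : 0 < k) (hz : F.proj (m 0) z ≠ 0)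
    (h : (F.blockNorms z k m).support.Nonempty) : (F.blockNorms z k m).support.min' h = m 0 :=
  le_antisymm (Finset.min'_le _ _ (apply_zero_mem_support_blockNorms hm hk hz))
    (Finset.le_min' _ _ _ fun _ hj => (mem_support_blockNorms hm.monotone hq hj).1)

theorem isCoeffBlockSeq_blockNorms {z : ℕ → Z} {p : ℕ → ℕ}
    (hz : ∀ n j, p (n + 1) ≤ j → F.proj j (z n) = 0) (hpz : ∀ n, F.proj (p n) (z n) ≠ 0)
    {k : ℕ → ℕ} {m : ℕ → ℕ → ℕ} (hm : ∀ n, StrictMono (m n)) (hm0 : ∀ n, m n 0 = p n)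
    (hk : ∀ n, 0 < k n) : IsCoeffBlockSeq fun n => F.blockNorms (z n) (k n) (m n) := by
  refine ⟨fun n h => ?_, fun n i hi j hj => ?_⟩
  · have := apply_zero_mem_support_blockNorms (hm n) (hk n) ((hm0 n).symm ▸ hpz n)
    simp [h] at this
  · exact (mem_support_blockNorms (hm n).monotone (hz n) hi).2.trans_le
      (hm0 (n + 1) ▸ (mem_support_blockNorms (hm (n + 1)).monotone (hz (n + 1)) hj).1)

theorem blockNorms_concatCuts (z : Z) {m₁ m₂ : ℕ → ℕ} {k₁ : ℕ} (h : m₁ k₁ = m₂ 0) (k₂ : ℕ) :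
    F.blockNorms z (k₁ + k₂) (concatCuts m₁ k₁ m₂) =
      F.blockNorms z k₁ m₁ + F.blockNorms z k₂ m₂ := by
  rw [blockNorms_length_add]
  congr 1
  · exact blockNorms_congr z fun i hi => if_pos hi
  · exact blockNorms_congr z fun i _ => by
      rw [concatCuts_of_le h (by omega), Nat.add_sub_cancel_left]

theorem proj_sum_smul_eq_zero {z : ℕ → Z} {p : ℕ → ℕ} (hp : Monotone p)
    (hz : ∀ n j, p (n + 1) ≤ j → F.proj j (z n) = 0) (a : ℕ → ℝ) {N j : ℕ} (hj : p N ≤ j) :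
    F.proj j (∑ n ∈ Finset.range N, a n • z n) = 0 := by
  rw [map_sum]
  refine Finset.sum_eq_zero fun n hn => ?_
  rw [map_smul, hz n j ((hp (Finset.mem_range.mp hn)).trans hj), smul_zero]

theorem exists_blockNorms_sum {z : ℕ → Z} {p : ℕ → ℕ} (hlo : ∀ n, ∀ j < p n, F.proj j (z n) = 0)
    (hhi : ∀ n j, p (n + 1) ≤ j → F.proj j (z n) = 0) {k : ℕ → ℕ} {m : ℕ → ℕ → ℕ}
    (hm : ∀ n, StrictMono (m n)) (hm0 : ∀ n, m n 0 = p n) (hmk : ∀ n, m n (k n) = p (n + 1))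
    (a : ℕ → ℝ) (N : ℕ) :
    ∃ K M, StrictMono M ∧ M K = p N ∧
      F.blockNorms (∑ n ∈ Finset.range N, a n • z n) K M =
        ∑ n ∈ Finset.range N, |a n| • F.blockNorms (z n) (k n) (m n) := by
  have hp : Monotone p := monotone_nat_of_le_succ fun n => by
    rw [← hm0, ← hmk]; exact (hm n).monotone (Nat.zero_le _)
  induction N with
  | zero => exact ⟨0, fun i => p 0 + i, strictMono_id.const_add _, rfl, by simp [blockNorms]⟩
  | succ N ih =>
    obtain ⟨K, M, hM, hMK, hsum⟩ := ih
    have hjoin : M K = m N 0 := hMK.trans (hm0 N).symm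
    refine ⟨K + k N, concatCuts M K (m N), strictMono_concatCuts hM (hm N) hjoin, ?_, ?_⟩
    · rw [concatCuts_of_le hjoin (Nat.le_add_right _ _), Nat.add_sub_cancel_left, hmk]
    rw [Finset.sum_range_succ, Finset.sum_range_succ, blockNorms_concatCuts _ hjoin,
      blockNorms_add_of_proj_eq_zero hM.monotone, hsum, add_comm (∑ n ∈ _, _ • z n),
      blockNorms_add_of_proj_eq_zero (hm N).monotone, blockNorms_smul]
    · intro j hj
      rw [hm0] at hj
      exact proj_sum_smul_eq_zero hp hhi a (Finset.mem_Ico.mp hj).1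
    · intro j hj
      rw [map_smul, hlo N j (hMK ▸ (Finset.mem_Ico.mp hj).2), smul_zero]

end FDD

namespace RSchauderBasis

variable {V : Type*} [NormedAddCommGroup V] [NormedSpace ℝ V] (B : RSchauderBasis V)

theorem vec_eq_linearCombination (c : ℕ →₀ ℝ) : B.vec c = Finsupp.linearCombination ℝ B.v c :=
  (Finsupp.linearCombination_apply ℝ c).symm

theorem vec_add (c d : ℕ →₀ ℝ) : B.vec (c + d) = B.vec c + B.vec d := by
  simp only [vec_eq_linearCombination, map_add]

theorem vec_smul (r : ℝ) (c : ℕ →₀ ℝ) : B.vec (r • c) = r • B.vec c := by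
  simp only [vec_eq_linearCombination, map_smul]

theorem vec_finsuppSum (a : ℕ →₀ ℝ) (c : ℕ → ℕ →₀ ℝ) :
    B.vec (a.sum fun n r => r • c n) = a.sum fun n r => r • B.vec (c n) := by
  simp only [vec_eq_linearCombination, map_finsuppSum, map_smul]

theorem norm_vec_single (hN : B.Normalized) (j : ℕ) (r : ℝ) :
    ‖B.vec (Finsupp.single j r)‖ = |r| := by
  rw [vec_eq_linearCombination, Finsupp.linearCombination_single, norm_smul, hN j, mul_one,
    Real.norm_eq_abs]

variable {B}

theorem Unconditional.norm_vec_le_add (hU : B.Unconditional) {c d : ℕ →₀ ℝ}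
    (hc : 0 ≤ c) (hd : 0 ≤ d) : ‖B.vec c‖ ≤ ‖B.vec (c + d)‖ :=
  hU c (c + d) fun j => by
    rw [Finsupp.add_apply, abs_of_nonneg (hc j), abs_of_nonneg (add_nonneg (hc j) (hd j))]
    exact le_add_of_nonneg_right (hd j)

theorem LowerBlockEstSelf.mul_norm_le {C : ℝ} (hlow : B.LowerBlockEstSelf C) (hC : 0 ≤ C)
    (hU : B.Unconditional) {c : ℕ → ℕ →₀ ℝ} (hc : IsCoeffBlockSeq c) (hc0 : ∀ n, 0 ≤ c n)
    {θ : ℝ} (hθ : 0 < θ) (hθc : ∀ n, θ ≤ ‖B.vec (c n)‖) (a : ℕ →₀ ℝ) :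
    θ * ‖a.sum fun n r => r • B.v ((c n).support.min' (Finsupp.support_nonempty_iff.mpr (hc.1 n)))‖
      ≤ C * ‖B.vec (a.sum fun n r => |r| • c n)‖ := by
  have hpos : ∀ n, 0 < ‖B.vec (c n)‖ := fun n => hθ.trans_le (hθc n)
  set d : ℕ → ℕ →₀ ℝ := fun n => ‖B.vec (c n)‖⁻¹ • c n
  have hsupp : ∀ n, (d n).support = (c n).support := fun n =>
    Finsupp.support_smul_eq (inv_ne_zero (hpos n).ne')
  have hd : IsCoeffBlockSeq d :=
    ⟨fun n => smul_ne_zero (inv_ne_zero (hpos n).ne') (hc.1 n), fun n i hi j hj =>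
      hc.2 n i (hsupp n ▸ hi) j (hsupp (n + 1) ▸ hj)⟩
  have hd1 : ∀ n, ‖B.vec (d n)‖ = 1 := fun n => by
    rw [vec_smul, norm_smul, norm_inv, norm_norm, inv_mul_cancel₀ (hpos n).ne']
  have hdom := hlow d hd hd1 a
  simp only [hsupp] at hdom
  have hcomp : ‖a.sum fun n r => r • B.vec (d n)‖ ≤ θ⁻¹ * ‖B.vec (a.sum fun n r => |r| • c n)‖ := by
    have := hU (a.sum fun n r => r • d n) (θ⁻¹ • a.sum fun n r => |r| • c n) fun j => by
      simp only [Finsupp.sum, Finsupp.smul_apply, Finsupp.finsetSum_apply, smul_eq_mul]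
      refine (Finset.abs_sum_le_sum_abs _ _).trans (le_abs.mpr (Or.inl ?_))
      rw [Finset.mul_sum]
      refine Finset.sum_le_sum fun n _ => ?_
      have hinv : ‖B.vec (c n)‖⁻¹ ≤ θ⁻¹ := inv_anti₀ hθ (hθc n)
      simp only [d, Finsupp.smul_apply, smul_eq_mul, abs_mul, abs_inv, abs_norm,
        abs_of_nonneg (hc0 n j)]
      calc |a n| * (‖B.vec (c n)‖⁻¹ * c n j) ≤ |a n| * (θ⁻¹ * c n j) := by
            gcongr; exact hc0 n j
        _ = θ⁻¹ * (|a n| * c n j) := by ring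
    rw [← vec_finsuppSum]
    rwa [vec_smul, norm_smul, Real.norm_eq_abs, abs_inv, abs_of_pos hθ] at this
  calc θ * _ ≤ θ * (C * ‖a.sum fun n r => r • B.vec (d n)‖) := by gcongr
    _ ≤ θ * (C * (θ⁻¹ * ‖B.vec (a.sum fun n r => |r| • c n)‖)) := by gcongr
    _ = C * ‖B.vec (a.sum fun n r => |r| • c n)‖ := by field_simp

end RSchauderBasis

section ZVnorm

variable {V : Type*} [NormedAddCommGroup V] [NormedSpace ℝ V] {B : RSchauderBasis V}
variable {Z : Type*} [NormedAddCommGroup Z] [NormedSpace ℝ Z] {F : FDD Z}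

theorem RSchauderBasis.vec_blockNorms (B : RSchauderBasis V) (F : FDD Z) (z : Z) (k : ℕ)
    (m : ℕ → ℕ) :
    B.vec (F.blockNorms z k m) =
      ∑ i ∈ Finset.range k, ‖∑ j ∈ Finset.Ico (m i) (m (i + 1)), F.proj j z‖ • B.v (m i) := by
  simp only [FDD.blockNorms, vec_eq_linearCombination, map_sum,
    Finsupp.linearCombination_single, FDD.projIco_apply]

theorem norm_vec_blockNorms_le_of_le (hU : B.Unconditional) (z : Z) {k l : ℕ} (hkl : k ≤ l)
    (m : ℕ → ℕ) : ‖B.vec (F.blockNorms z k m)‖ ≤ ‖B.vec (F.blockNorms z l m)‖ := by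
  obtain ⟨l, rfl⟩ := Nat.exists_eq_add_of_le hkl
  rw [FDD.blockNorms_length_add]
  exact hU.norm_vec_le_add (FDD.blockNorms_nonneg _ _ _) (FDD.blockNorms_nonneg _ _ _)


theorem norm_vec_blockNorms_le (hN : B.Normalized) {z : Z} {R : ℕ}
    (hR : ∀ j, R ≤ j → F.proj j z = 0) (k : ℕ) {m : ℕ → ℕ} (hm : Monotone m) :
    ‖B.vec (F.blockNorms z k m)‖ ≤ ∑ j ∈ Finset.range R, ‖F.proj j z‖ := by
  have hS : Finset.Ico (m 0) (m k) ⊆ Finset.range (max (m k) R) := fun j hj =>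
    Finset.mem_range.mpr ((Finset.mem_Ico.mp hj).2.trans_le (le_max_left _ _))
  calc ‖B.vec (F.blockNorms z k m)‖
      ≤ ∑ i ∈ Finset.range k, ‖F.projIco (m i) (m (i + 1)) z‖ := by
        rw [B.vec_blockNorms]
        refine (norm_sum_le _ _).trans_eq (Finset.sum_congr rfl fun i _ => ?_)
        rw [norm_smul, hN, mul_one, norm_norm, FDD.projIco_apply]
    _ ≤ ∑ i ∈ Finset.range k, ∑ j ∈ Finset.Ico (m i) (m (i + 1)), ‖F.proj j z‖ :=
        Finset.sum_le_sum fun i _ => by rw [F.projIco_apply]; exact norm_sum_le _ _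
    _ = ∑ j ∈ Finset.Ico (m 0) (m k), ‖F.proj j z‖ := sum_range_sum_Ico_consecutive _ hm k
    _ ≤ ∑ j ∈ Finset.range (max (m k) R), ‖F.proj j z‖ :=
        Finset.sum_le_sum_of_subset_of_nonneg hS fun _ _ _ => norm_nonneg _
    _ = ∑ j ∈ Finset.range R, ‖F.proj j z‖ := by
        refine (Finset.sum_subset (Finset.range_subset_range.mpr (le_max_right _ _))
          fun j _ hj => ?_).symm
        rw [hR j (not_lt.mp (Finset.mem_range.not.mp hj)), norm_zero]

theorem norm_vec_blockNorms_le_ZVnorm (hN : B.Normalized) {z : Z} {R : ℕ}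
    (hR : ∀ j, R ≤ j → F.proj j z = 0) (k : ℕ) {m : ℕ → ℕ} (hm : StrictMono m) :
    ‖B.vec (F.blockNorms z k m)‖ ≤ ZVnorm B F z := by
  refine le_csSup ⟨∑ j ∈ Finset.range R, ‖F.proj j z‖, ?_⟩ ⟨k, m, hm, by rw [B.vec_blockNorms]⟩
  rintro _ ⟨k', m', hm', rfl⟩
  rw [← B.vec_blockNorms]
  exact norm_vec_blockNorms_le hN hR k' hm'.monotone

theorem exists_lt_norm_vec_blockNorms {z : Z} {θ : ℝ} (hθ : θ < ZVnorm B F z) :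
    ∃ k m, StrictMono m ∧ θ < ‖B.vec (F.blockNorms z k m)‖ := by
  have hex := exists_lt_of_lt_csSup (hs := ?_) hθ
  · obtain ⟨_, ⟨k, m, hm, rfl⟩, hlt⟩ := hex
    exact ⟨k, m, hm, by rwa [B.vec_blockNorms]⟩
  · exact ⟨_, 0, id, strictMono_id, rfl⟩

theorem norm_vec_blockNorms_le_norm_projIco (hN : B.Normalized) {z : Z} {p : ℕ}
    (hp : ∀ j < p, F.proj j z = 0) {m : ℕ → ℕ} (hm : StrictMono m) {s : ℕ}
    (hsp : ∀ i < s, m i ≤ p) : ‖B.vec (F.blockNorms z s m)‖ ≤ ‖F.projIco p (m s) z‖ := by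
  rcases eq_or_ne s 0 with rfl | hs
  · simp [FDD.blockNorms, RSchauderBasis.vec]
  obtain ⟨s, rfl⟩ := Nat.exists_eq_add_one_of_ne_zero hs
  have hzero : F.blockNorms z s m = 0 := FDD.blockNorms_eq_zero hm.monotone fun j hj =>
    hp j ((Finset.mem_Ico.mp hj).2.trans_le (hsp s (by omega)))
  have hlast : F.projIco (m s) (m (s + 1)) z = F.projIco p (m (s + 1)) z :=
    (F.projIco_eq_projIco (hsp s (by omega)) le_rfl fun j hj hj' => hp j (by simp_all)).symm
  rw [FDD.blockNorms_length_add, hzero, zero_add, FDD.blockNorms_one, B.norm_vec_single hN,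
    add_zero, hlast, abs_norm]

/-- The blocks before `p` vanish and the block through `p` becomes the new first block, so the old
vector is the sum of two vectors, each dominated by the new one. -/
theorem exists_blockNorms_start (hN : B.Normalized) (hU : B.Unconditional) {z : Z} {p : ℕ}
    (hp : ∀ j < p, F.proj j z = 0) (k : ℕ) {m : ℕ → ℕ} (hm : StrictMono m) :
    ∃ k' m', StrictMono m' ∧ m' 0 = p ∧
      ‖B.vec (F.blockNorms z k m)‖ ≤ 2 * ‖B.vec (F.blockNorms z k' m')‖ := by
  classical
  have hex : ∃ s, p < m s := ⟨p + 1, p.lt_succ_self.trans_le (hm.id_le _)⟩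
  set s := Nat.find hex
  have hps : p < m s := Nat.find_spec hex
  have hsp : ∀ i < s, m i ≤ p := fun i hi => not_lt.mp (Nat.find_min hex hi)
  set c := ‖F.projIco p (m s) z‖
  set tail := F.blockNorms z k fun i => m (s + i)
  have hhead : ‖B.vec (F.blockNorms z s m)‖ ≤ c := norm_vec_blockNorms_le_norm_projIco hN hp hm hsp
  let first : ℕ → ℕ := fun i => p + i * (m s - p)
  have hfirst : StrictMono first := fun i j hij => by
    simp only [first]; gcongr; omega
  have hfirst1 : first 1 = m s := by simp only [first]; omega
  refine ⟨1 + k, concatCuts first 1 fun i => m (s + i),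
    strictMono_concatCuts hfirst (hm.comp fun _ _ h => by omega) (by simpa using hfirst1),
    by simp [concatCuts, first], ?_⟩
  have hsingle : F.blockNorms z 1 first = Finsupp.single p c := by
    rw [FDD.blockNorms_one, hfirst1]; simp [first, c]
  rw [FDD.blockNorms_concatCuts _ (by simpa using hfirst1), hsingle]
  have hsingle0 : 0 ≤ Finsupp.single p c := Finsupp.single_nonneg.mpr (norm_nonneg _)
  have hsingle_le : c ≤ ‖B.vec (Finsupp.single p c + tail)‖ := by
    refine le_of_eq_of_le ?_ (hU.norm_vec_le_add hsingle0 (FDD.blockNorms_nonneg _ _ _))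
    rw [B.norm_vec_single hN, abs_norm]
  have htail_le : ‖B.vec tail‖ ≤ ‖B.vec (Finsupp.single p c + tail)‖ := by
    rw [add_comm]
    exact hU.norm_vec_le_add (FDD.blockNorms_nonneg _ _ _) hsingle0
  calc ‖B.vec (F.blockNorms z k m)‖
      ≤ ‖B.vec (F.blockNorms z (s + k) m)‖ := norm_vec_blockNorms_le_of_le hU z (by omega) m
    _ ≤ ‖B.vec (F.blockNorms z s m)‖ + ‖B.vec tail‖ := by
        rw [FDD.blockNorms_length_add, B.vec_add]; exact norm_add_le _ _
    _ ≤ 2 * ‖B.vec (Finsupp.single p c + tail)‖ := by linarith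

theorem exists_blockNorms_stop (hU : B.Unconditional) {z : Z} {q : ℕ}
    (hq : ∀ j, q ≤ j → F.proj j z = 0) (k : ℕ) {m : ℕ → ℕ} (hm : StrictMono m) (hmq : m 0 < q) :
    ∃ k' m', StrictMono m' ∧ m' 0 = m 0 ∧ m' k' = q ∧
      ‖B.vec (F.blockNorms z k m)‖ ≤ ‖B.vec (F.blockNorms z k' m')‖ := by
  classical
  have hex : ∃ t, q ≤ m t := ⟨q, hm.id_le q⟩
  set t := Nat.find hex
  have hqt : q ≤ m t := Nat.find_spec hex
  have htq : ∀ i < t, m i < q := fun i hi => not_le.mp (Nat.find_min hex hi)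
  obtain ⟨t', ht⟩ : ∃ t', t = t' + 1 :=
    Nat.exists_eq_add_one_of_ne_zero fun h => hmq.not_ge (h ▸ hqt)
  let m' : ℕ → ℕ := fun i => if i < t then m i else q + (i - t)
  have hm' : StrictMono m' := strictMono_nat_of_lt_succ fun i => by
    simp only [m']
    split_ifs with h₁ h₂ h₂
    · exact hm i.lt_succ_self
    · exact (htq i h₁).trans_le le_self_add
    · omega
    · omega
  refine ⟨t, m', hm', if_pos (by omega), by simp [m'], ?_⟩
  have htail : F.blockNorms z k (fun i => m (t + i)) = 0 :=
    FDD.blockNorms_eq_zero (hm.comp fun _ _ h => by omega).monotone fun j hj =>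
      hq j (hqt.trans (by simpa using (Finset.mem_Ico.mp hj).1))
  have hlast : F.projIco (m t') (m t) z = F.projIco (m' t') (m' t) z := by
    simp only [m', if_pos (show t' < t by omega), lt_irrefl, if_false, Nat.sub_self, add_zero]
    exact (F.projIco_eq_projIco le_rfl hqt fun j hj hj' =>
      hq j (by simp only [Finset.mem_Ico] at hj hj'; omega)).symm
  have hcut : F.blockNorms z t m = F.blockNorms z t m' := by
    have hmt' : m' t' = m t' := if_pos (by omega)
    rw [ht, FDD.blockNorms_length_add, FDD.blockNorms_length_add, FDD.blockNorms_one,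
      FDD.blockNorms_one]
    simp only [add_zero, ← ht]
    rw [hlast, hmt', FDD.blockNorms_congr z fun i hi => (if_pos (by omega) : m' i = m i)]
  calc ‖B.vec (F.blockNorms z k m)‖
      ≤ ‖B.vec (F.blockNorms z (t + k) m)‖ := norm_vec_blockNorms_le_of_le hU z (by omega) m
    _ = ‖B.vec (F.blockNorms z t m')‖ := by
        rw [FDD.blockNorms_length_add, htail, add_zero, hcut]

theorem exists_blockNorms_Ico_of_lt_ZVnorm (hN : B.Normalized) (hU : B.Unconditional) {z : Z}
    {p q : ℕ} (hp : ∀ j < p, F.proj j z = 0) (hq : ∀ j, q ≤ j → F.proj j z = 0) (hpq : p < q)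
    {θ : ℝ} (hθ : θ < ZVnorm B F z) :
    ∃ k m, StrictMono m ∧ m 0 = p ∧ m k = q ∧ θ ≤ 2 * ‖B.vec (F.blockNorms z k m)‖ := by
  obtain ⟨k, m, hm, hθm⟩ := exists_lt_norm_vec_blockNorms hθ
  obtain ⟨k', m', hm', hm'0, hmm'⟩ := exists_blockNorms_start hN hU hp k hm
  obtain ⟨k'', m'', hm'', hm''0, hm''k, hm'm''⟩ := exists_blockNorms_stop hU hq k' hm' (hm'0 ▸ hpq)
  exact ⟨k'', m'', hm'', hm''0.trans hm'0, hm''k, by linarith⟩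

theorem norm_vec_sum_blockNorms_le_ZVnorm (hN : B.Normalized) {z : ℕ → Z} {p : ℕ → ℕ}
    (hlo : ∀ n, ∀ j < p n, F.proj j (z n) = 0) (hhi : ∀ n j, p (n + 1) ≤ j → F.proj j (z n) = 0)
    {k : ℕ → ℕ} {m : ℕ → ℕ → ℕ} (hm : ∀ n, StrictMono (m n)) (hm0 : ∀ n, m n 0 = p n)
    (hmk : ∀ n, m n (k n) = p (n + 1)) (a : ℕ → ℝ) (N : ℕ) :
    ‖B.vec (∑ n ∈ Finset.range N, |a n| • F.blockNorms (z n) (k n) (m n))‖ ≤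
      ZVnorm B F (∑ n ∈ Finset.range N, a n • z n) := by
  have hp : Monotone p := monotone_nat_of_le_succ fun n => by
    rw [← hm0, ← hmk]; exact (hm n).monotone (Nat.zero_le _)
  obtain ⟨K, M, hM, -, hsum⟩ := F.exists_blockNorms_sum hlo hhi hm hm0 hmk a N
  rw [← hsum]
  exact norm_vec_blockNorms_le_ZVnorm hN (fun j => F.proj_sum_smul_eq_zero hp hhi a) K hM

end ZVnorm

theorem fdd_lower_block_estimates_in_ZV_general
    {V : Type*} [NormedAddCommGroup V] [NormedSpace ℝ V]
    (B : RSchauderBasis V) (hN : B.Normalized) (hU : B.Unconditional)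
    (C : ℝ) (hC : 1 ≤ C) (hlow : B.LowerBlockEstSelf C)
    {Z : Type*} [NormedAddCommGroup Z] [NormedSpace ℝ Z]
    (F : FDD Z) :
    ∀ z : ℕ → Z, (∀ n, z n ≠ 0) → (∀ n, (F.supp (z n)).Finite) →
      (∀ n, ∀ i ∈ F.supp (z n), ∀ j ∈ F.supp (z (n + 1)), i < j) →
      (∀ n, ZVnorm B F (z n) = 1) →
      ∀ a : ℕ →₀ ℝ,
        ‖a.sum fun n r => r • B.v (F.minSupp (z n))‖ ≤
          (2 * C) * ZVnorm B F (a.sum fun n r => r • z n) := by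
  intro z hz _ hblk hZV a
  set p : ℕ → ℕ := fun n => F.minSupp (z n)
  have hpz : ∀ n, F.proj (p n) (z n) ≠ 0 := fun n => F.proj_minSupp_ne_zero (hz n)
  have hlo : ∀ n, ∀ j < p n, F.proj j (z n) = 0 := fun n _ => F.proj_eq_zero_of_lt_minSupp
  have hhi : ∀ n j, p (n + 1) ≤ j → F.proj j (z n) = 0 := fun n j hj =>
    not_not.mp fun h => (hblk n j h _ (hpz (n + 1))).not_ge hj
  have hp : ∀ n, p n < p (n + 1) := fun n => not_le.mp fun h => hpz n (hhi n _ h)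
  obtain ⟨N, haN⟩ := a.support.exists_nat_subset_range
  refine le_of_forall_mul_le_of_lt_one fun θ ⟨hθ0, hθ1⟩ => ?_
  choose k m hm hm0 hmk hθ using fun n =>
    exists_blockNorms_Ico_of_lt_ZVnorm hN hU (hlo n) (hhi n) (hp n) (hZV n ▸ hθ1)
  have hk : ∀ n, 0 < k n := fun n =>
    Nat.pos_of_ne_zero fun h => (hp n).ne (by rw [← hm0, ← hmk, h])
  have hlower := hlow.mul_norm_le (by linarith) hU (F.isCoeffBlockSeq_blockNorms hhi hpz hm hm0 hk)
    (fun n => FDD.blockNorms_nonneg _ _ _) (half_pos hθ0) (fun n => by linarith [hθ n]) a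
  have hmin : ∀ n h, (F.blockNorms (z n) (k n) (m n)).support.min' h = p n := fun n h =>
    (FDD.min'_support_blockNorms (hm n) (hhi n) (hk n) ((hm0 n).symm ▸ hpz n) h).trans (hm0 n)
  simp only [hmin] at hlower
  rw [Finsupp.sum_of_support_subset a haN (fun n r => |r| • F.blockNorms (z n) (k n) (m n))
    (by simp)] at hlower
  rw [Finsupp.sum_of_support_subset a haN (fun n r => r • z n) (by simp)]
  have hsum := mul_le_mul_of_nonneg_left
    (norm_vec_sum_blockNorms_le_ZVnorm hN hlo hhi hm hm0 hmk a N) (by linarith : 0 ≤ C)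
  linarith

/-- If `(v_n)` satisfies subsequential `C`-`V`-lower block estimates in itself, then any
FDD `(E_n)` of `Z` satisfies subsequential `2C`-`V`-lower block estimates in `Z^V`. -/
theorem fdd_lower_block_estimates_in_ZV
    {V : Type*} [NormedAddCommGroup V] [NormedSpace ℝ V] [CompleteSpace V]
    (B : RSchauderBasis V) (hN : B.Normalized) (hU : B.Unconditional)
    (C : ℝ) (hC : 1 ≤ C) (hlow : B.LowerBlockEstSelf C)
    {Z : Type*} [NormedAddCommGroup Z] [NormedSpace ℝ Z] [CompleteSpace Z]
    (F : FDD Z) :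
    ∀ z : ℕ → Z, (∀ n, z n ≠ 0) → (∀ n, (F.supp (z n)).Finite) →
      (∀ n, ∀ i ∈ F.supp (z n), ∀ j ∈ F.supp (z (n + 1)), i < j) →
      (∀ n, ZVnorm B F (z n) = 1) →
      ∀ a : ℕ →₀ ℝ,
        ‖a.sum fun n r => r • B.v (F.minSupp (z n))‖ ≤
          (2 * C) * ZVnorm B F (a.sum fun n r => r • z n) :=
  fdd_lower_block_estimates_in_ZV_general B hN hU C hC hlow F

end
end

section
/- (First part of Proposition 3.1:) Let α be a countable ordinal (with a fixed choice of cofinal sequences defining the Schreier family S_α). If (m_n) and (k_n) are sequences of natural numbers with m_n ≤ k_n < m_{n+1} for all n, then for every finitely supported real sequence (a_n), ‖Σ a_n e_{k_n}‖_α ≤ 2 ‖Σ a_n e_{m_n}‖_α; that is, (e_{m_n}) 2-dominates (e_{k_n}) in the Schreier space X_α. -/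
/-!
Schreier families are hereditary and spreading: if `g` maps `F` strictly increasingly into
some `E ∈ S_α` with `g q ≤ q`, then `F ∈ S_α`. Let `E ∈ S_α` and let `n₁ < ⋯ < n_r` be the
indices with `k_{n_i} ∈ E`. Since `k_{n_{i-1}} < m_{n_i}`, the set `{m_{n_2}, …, m_{n_r}}` is
such an `F`, via `m_{n_i} ↦ k_{n_{i-1}}`, so it lies in `S_α`; the remaining coefficient
`a_{n₁}` is bounded through the singleton `{m_{n₁}}`. Each of the two pieces of the sum over
`E` is therefore at most `‖Σ a_n e_{m_n}‖_α`.
-/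

open Filter Topology Metric

noncomputable section


/-! ### Schreier families on ℕ+ = {1,2,...} -/

/-- The successor step of the Schreier hierarchy. -/
def schreierSucc (S : Set (Finset ℕ+)) : Set (Finset ℕ+) :=
  insert ∅ {F | ∃ (m : ℕ) (hm : 0 < m) (Es : Fin m → Finset ℕ+),
    (∀ i, Es i ∈ S) ∧ (∀ i, (Es i).Nonempty) ∧
    (∀ i j : Fin m, i < j → ∀ p ∈ Es i, ∀ q ∈ Es j, p < q) ∧
    (∀ p ∈ Es ⟨0, hm⟩, m ≤ (p : ℕ)) ∧
    F = Finset.univ.biUnion Es}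

/-- The Schreier family `S_o`, relative to a choice `c` of cofinal sequences at limit
ordinals. -/
def schreier (c : Ordinal → ℕ+ → Ordinal) (o : Ordinal) : Set (Finset ℕ+) :=
  Ordinal.limitRecOn o
    (insert ∅ {E | ∃ n : ℕ+, E = {n}})
    (fun _ S => schreierSucc S)
    (fun l _ ih =>
      insert ∅ {F | ∃ (n : ℕ+) (h : c l n < l), F ∈ ih (c l n) h ∧ ∀ k ∈ F, n ≤ k})

/-- `c` is a legitimate choice of cofinal sequences: at every countable limit ordinal `o`,
`c o` is a strictly increasing sequence of ordinals below `o` with supremum `o`. -/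
def IsCofinalChoice (c : Ordinal → ℕ+ → Ordinal) : Prop :=
  ∀ o : Ordinal, Order.IsSuccLimit o → o < Ordinal.omega 1 →
    StrictMono (c o) ∧ (∀ n : ℕ+, c o n < o) ∧ ∀ b < o, ∃ n : ℕ+, b ≤ c o n

/-- The Schreier norm `‖x‖_o = sup { Σ_{n ∈ E} |x n| : E ∈ S_o }` of a finitely supported
function. -/
def schreierNorm (c : Ordinal → ℕ+ → Ordinal) (o : Ordinal) (x : ℕ+ →₀ ℝ) : ℝ :=
  sSup {r : ℝ | ∃ E ∈ schreier c o, r = ∑ n ∈ E, |x n|}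

/-- The finitely supported function `Σ_n a_n e_{k n}`. -/
def schreierComb (k : ℕ → ℕ+) (a : ℕ →₀ ℝ) : ℕ+ →₀ ℝ :=
  a.sum fun n r => Finsupp.single (k n) r

open Finset

section Interleaved

variable {β : Type*} [LinearOrder β] {m k : ℕ → β}

theorem strictMono_of_interleaved_left (h1 : ∀ n, m n ≤ k n) (h2 : ∀ n, k n < m (n + 1)) :
    StrictMono m :=
  strictMono_nat_of_lt_succ fun n => (h1 n).trans_lt (h2 n)

theorem strictMono_of_interleaved_right (h1 : ∀ n, m n ≤ k n) (h2 : ∀ n, k n < m (n + 1)) :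
    StrictMono k :=
  strictMono_nat_of_lt_succ fun n => (h2 n).trans_le (h1 (n + 1))

theorem interleaved_lt_iff (h1 : ∀ n, m n ≤ k n) (h2 : ∀ n, k n < m (n + 1)) (i j : ℕ) :
    k i < m j ↔ i < j := by
  have hm := strictMono_of_interleaved_left h1 h2
  refine ⟨fun h => ?_, fun h => (h2 i).trans_le (hm.monotone h)⟩
  by_contra! hji
  exact (h.trans_le' ((hm.monotone hji).trans (h1 i))).false

end Interleaved

theorem Finsupp.sum_abs_mapDomain_image {α β : Type*} [DecidableEq β] {f : α → β}
    (hf : Function.Injective f) (a : α →₀ ℝ) (s : Finset α) :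
    ∑ p ∈ s.image f, |a.mapDomain f p| = ∑ n ∈ s, |a n| := by
  rw [sum_image fun _ _ _ _ h => hf h]
  simp only [Finsupp.mapDomain_apply hf]

theorem Finsupp.sum_abs_mapDomain {α β : Type*} [DecidableEq β] {f : α → β}
    (hf : Function.Injective f) (a : α →₀ ℝ) (E : Finset β) :
    ∑ p ∈ E, |a.mapDomain f p| = ∑ n ∈ a.support.filter (f · ∈ E), |a n| := by
  rw [← Finsupp.sum_abs_mapDomain_image hf]
  refine (sum_subset (fun p hp => ?_) fun p hpE hp => ?_).symm
  · obtain ⟨n, hn, rfl⟩ := mem_image.mp hp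
    exact (mem_filter.mp hn).2
  · have hsupp : p ∉ (a.mapDomain f).support := fun hp' => by
      obtain ⟨n, hn, rfl⟩ := mem_image.mp (Finsupp.mapDomain_support hp')
      exact hp (mem_image_of_mem f (mem_filter.mpr ⟨hn, hpE⟩))
    rw [Finsupp.notMem_support_iff.mp hsupp, abs_zero]

theorem schreierComb_eq_mapDomain (k : ℕ → ℕ+) (a : ℕ →₀ ℝ) :
    schreierComb k a = a.mapDomain k :=
  rfl

/-- Hereditary and spreading at once: `F` is a spread of the subset `g '' F` of `E`. -/
def IsSpreading (S : Set (Finset ℕ+)) : Prop :=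
  ∀ E ∈ S, ∀ (F : Finset ℕ+) (g : ℕ+ → ℕ+), Set.MapsTo g F E → StrictMonoOn g F →
    (∀ q ∈ F, g q ≤ q) → F ∈ S

/-- Empty pieces are discarded, which only lowers their number, so the bound `M ≤ p` survives. -/
theorem mem_schreierSucc_of_pieces {S : Set (Finset ℕ+)} {M : ℕ} (P : Fin M → Finset ℕ+)
    (hS : ∀ i, (P i).Nonempty → P i ∈ S)
    (hord : ∀ i j, i < j → ∀ p ∈ P i, ∀ q ∈ P j, p < q)
    (hM : ∀ p ∈ univ.biUnion P, M ≤ (p : ℕ)) :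
    univ.biUnion P ∈ schreierSucc S := by
  classical
  set T := univ.filter fun i => (P i).Nonempty
  rcases T.eq_empty_or_nonempty with hT | hT
  · refine Or.inl (eq_empty_iff_forall_notMem.mpr fun p hp => ?_)
    obtain ⟨i, -, hi⟩ := mem_biUnion.mp hp
    exact notMem_empty i (hT ▸ mem_filter.mpr ⟨mem_univ i, p, hi⟩)
  let σ := T.orderIsoOfFin rfl
  have hpos : 0 < T.card := card_pos.mpr hT
  have hσ (j : Fin T.card) : (P (σ j)).Nonempty := (mem_filter.mp (σ j).2).2
  refine Or.inr ⟨T.card, hpos, fun j => P (σ j), fun j => hS _ (hσ j), hσ,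
    fun j j' h => hord _ _ (σ.strictMono h), fun p hp => ?_, ?_⟩
  · have hTM : T.card ≤ M := by simpa using T.card_le_univ
    exact hTM.trans (hM p (mem_biUnion.mpr ⟨_, mem_univ _, hp⟩))
  · ext p
    simp only [mem_biUnion, mem_univ, true_and]
    refine ⟨fun ⟨i, hi⟩ => ?_, fun ⟨j, hj⟩ => ⟨_, hj⟩⟩
    have hiT : i ∈ T := mem_filter.mpr ⟨mem_univ i, p, hi⟩
    exact ⟨σ.symm ⟨i, hiT⟩, by rwa [σ.apply_symm_apply]⟩

theorem le_of_mem_schreierSucc_pieces {M : ℕ} {hM : 0 < M} {Es : Fin M → Finset ℕ+}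
    (hne : ∀ i, (Es i).Nonempty) (hord : ∀ i j, i < j → ∀ p ∈ Es i, ∀ q ∈ Es j, p < q)
    (hmin : ∀ p ∈ Es ⟨0, hM⟩, M ≤ (p : ℕ)) {i : Fin M} {q : ℕ+} (hq : q ∈ Es i) :
    M ≤ (q : ℕ) := by
  rcases (Fin.mk_le_of_le_val (Nat.zero_le i) : (⟨0, hM⟩ : Fin M) ≤ i).eq_or_lt with h0 | hlt
  · exact hmin q (h0 ▸ hq)
  · obtain ⟨w, hw⟩ := hne ⟨0, hM⟩
    exact (hmin w hw).trans (PNat.coe_le_coe _ _ |>.mpr (hord _ _ hlt w hw q hq).le)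

theorem IsSpreading.schreierSucc {S : Set (Finset ℕ+)} (h : IsSpreading S) :
    IsSpreading (schreierSucc S) := by
  classical
  intro E hE F g hmaps hmono hle
  rcases hE with rfl | ⟨M, hM, Es, hS, hne, hord, hmin, rfl⟩
  · exact Or.inl (by simpa using hmaps)
  have hF : F = univ.biUnion fun i => F.filter (g · ∈ Es i) := by
    ext q
    simp only [mem_biUnion, mem_univ, true_and, mem_filter]
    exact ⟨fun hq => (mem_biUnion.mp (hmaps hq)).imp fun _ ⟨_, hi⟩ => ⟨hq, hi⟩,
      fun ⟨_, hq, _⟩ => hq⟩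
  rw [hF]
  refine mem_schreierSucc_of_pieces _ (fun i _ => ?_) (fun i j hij p hp q hq => ?_) ?_
  · exact h (Es i) (hS i) _ g (fun q hq => (mem_filter.mp hq).2)
      (hmono.mono fun q hq => (mem_filter.mp hq).1) fun q hq => hle q (mem_filter.mp hq).1
  · rw [mem_filter] at hp hq
    exact (hmono.lt_iff_lt hp.1 hq.1).mp (hord i j hij _ hp.2 _ hq.2)
  · rw [← hF]
    intro p hp
    obtain ⟨i, -, hi⟩ := mem_biUnion.mp (hmaps hp)
    exact (le_of_mem_schreierSucc_pieces hne hord hmin hi).trans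
      (PNat.coe_le_coe _ _ |>.mpr (hle p hp))

section Schreier

variable (c : Ordinal → ℕ+ → Ordinal)

theorem schreier_zero : schreier c 0 = insert ∅ {E | ∃ n : ℕ+, E = {n}} :=
  Ordinal.limitRecOn_zero _ _ _

theorem schreier_add_one (o : Ordinal) :
    schreier c (o + 1) = schreierSucc (schreier c o) :=
  Ordinal.limitRecOn_add_one _ _ _ _

theorem schreier_limit {l : Ordinal} (hl : Order.IsSuccLimit l) :
    schreier c l = insert ∅ {F | ∃ (n : ℕ+) (_ : c l n < l),
      F ∈ schreier c (c l n) ∧ ∀ k ∈ F, n ≤ k} :=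
  Ordinal.limitRecOn_limit _ _ _ _ hl

theorem mem_schreier_zero_iff {E : Finset ℕ+} : E ∈ schreier c 0 ↔ E.card ≤ 1 := by
  rw [schreier_zero, card_le_one_iff_subset_singleton]
  simp only [subset_singleton_iff, exists_or, exists_const, Set.mem_insert_iff, Set.mem_ofPred_eq]

theorem empty_mem_schreier (o : Ordinal) : ∅ ∈ schreier c o := by
  induction o using Ordinal.limitRecOn with
  | zero => simp [mem_schreier_zero_iff]
  | add_one o _ => rw [schreier_add_one]; exact Or.inl rfl
  | limit l hl _ => rw [schreier_limit c hl]; exact Or.inl rfl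

theorem singleton_mem_schreier (hc : IsCofinalChoice c) {o : Ordinal}
    (ho : o < Ordinal.omega 1) (p : ℕ+) : {p} ∈ schreier c o := by
  induction o using Ordinal.limitRecOn with
  | zero => simp [mem_schreier_zero_iff]
  | add_one o ih =>
    rw [schreier_add_one]
    refine Or.inr ⟨1, one_pos, fun _ => {p}, fun _ => ih ((Order.lt_succ o).trans ho),
      fun _ => singleton_nonempty p, fun i j hij => absurd (Subsingleton.elim i j) hij.ne,
      fun q _ => q.pos, by simp⟩
  | limit l hl ih =>
    rw [schreier_limit c hl]
    obtain ⟨-, hlt, -⟩ := hc l hl ho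
    exact Or.inr ⟨1, hlt 1, ih _ (hlt 1) ((hlt 1).trans ho), fun _ _ => one_le⟩

theorem isSpreading_schreier (o : Ordinal) : IsSpreading (schreier c o) := by
  induction o using Ordinal.limitRecOn with
  | zero =>
    intro E hE F g hmaps hmono _
    rw [mem_schreier_zero_iff] at hE ⊢
    exact (card_le_card_of_injOn g hmaps hmono.injOn).trans hE
  | add_one o ih =>
    rw [schreier_add_one]
    exact ih.schreierSucc
  | limit l hl ih =>
    rw [schreier_limit c hl]
    intro E hE F g hmaps hmono hle
    rcases hE with rfl | ⟨n, h, hE, hn⟩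
    · exact Or.inl (by simpa using hmaps)
    exact Or.inr ⟨n, h, ih _ h E hE F g hmaps hmono hle,
      fun q hq => (hn _ (hmaps hq)).trans (hle q hq)⟩

/-- Dropping the least index `n₀` of `N` is what makes room for the shift `m_n ↦ k_{n'}`,
with `n'` the predecessor of `n` in `N`. -/
theorem image_erase_mem_schreier {m k : ℕ → ℕ+} (h1 : ∀ n, m n ≤ k n)
    (h2 : ∀ n, k n < m (n + 1)) {o : Ordinal} {E : Finset ℕ+} (hE : E ∈ schreier c o)
    {N : Finset ℕ} (hN : ∀ n ∈ N, k n ∈ E) {n₀ : ℕ} (hn₀ : n₀ ∈ N) (hmin : ∀ n ∈ N, n₀ ≤ n) :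
    (N.erase n₀).image m ∈ schreier c o := by
  have hlt := interleaved_lt_iff h1 h2
  let pred : ℕ+ → ℕ := fun q => (N.filter (k · < q)).sup id
  have hpred : ∀ n ∈ N.erase n₀,
      pred (m n) ∈ N ∧ pred (m n) < n ∧ ∀ j ∈ N, j < n → j ≤ pred (m n) := by
    intro n hn
    obtain ⟨hne, hnN⟩ := mem_erase.mp hn
    have hsome : (N.filter (k · < m n)).Nonempty :=
      ⟨n₀, mem_filter.mpr ⟨hn₀, (hlt _ _).mpr ((hmin n hnN).lt_of_ne' hne)⟩⟩
    obtain ⟨j, hj, hjsup⟩ := exists_mem_eq_sup _ hsome id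
    rw [mem_filter, hlt] at hj
    have hpredj : pred (m n) = j := hjsup
    refine ⟨hpredj ▸ hj.1, hpredj ▸ hj.2, fun i hi hin => ?_⟩
    exact le_sup (f := id) (mem_filter.mpr ⟨hi, (hlt _ _).mpr hin⟩)
  refine isSpreading_schreier c o E hE _ (k ∘ pred) ?_ ?_ ?_
  · intro q hq
    obtain ⟨n, hn, rfl⟩ := mem_image.mp hq
    exact hN _ (hpred n hn).1
  · intro q hq q' hq' hqq'
    obtain ⟨n, hn, rfl⟩ := mem_image.mp hq
    obtain ⟨n', hn', rfl⟩ := mem_image.mp hq'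
    have hnn' : n < n' := (strictMono_of_interleaved_left h1 h2).lt_iff_lt.mp hqq'
    exact strictMono_of_interleaved_right h1 h2
      ((hpred n hn).2.1.trans_le ((hpred n' hn').2.2 n (mem_erase.mp hn).2 hnn'))
  · intro q hq
    obtain ⟨n, hn, rfl⟩ := mem_image.mp hq
    exact ((hlt _ _).mpr (hpred n hn).2.1).le

theorem sum_abs_le_schreierNorm (o : Ordinal) (x : ℕ+ →₀ ℝ) {E : Finset ℕ+}
    (hE : E ∈ schreier c o) : ∑ n ∈ E, |x n| ≤ schreierNorm c o x := by
  refine le_csSup ⟨∑ n ∈ x.support, |x n|, ?_⟩ ⟨E, hE, rfl⟩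
  rintro r ⟨D, -, rfl⟩
  calc ∑ n ∈ D, |x n| = ∑ n ∈ D ∩ x.support, |x n| := by
        refine (sum_subset inter_subset_left fun n hn hn' => ?_).symm
        rw [Finsupp.notMem_support_iff.mp fun hs => hn' (mem_inter.mpr ⟨hn, hs⟩), abs_zero]
    _ ≤ ∑ n ∈ x.support, |x n| :=
        sum_le_sum_of_subset_of_nonneg inter_subset_right fun _ _ _ => abs_nonneg _

theorem schreierNorm_nonneg (o : Ordinal) (x : ℕ+ →₀ ℝ) : 0 ≤ schreierNorm c o x := by
  simpa using sum_abs_le_schreierNorm c o x (empty_mem_schreier c o)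

end Schreier

/-- First part of Proposition 3.1: if `m_n ≤ k_n < m_{n+1}` then `(e_{m_n})`
`2`-dominates `(e_{k_n})` in the Schreier space `X_α`. -/
theorem schreier_two_domination
    (c : Ordinal → ℕ+ → Ordinal) (hc : IsCofinalChoice c)
    (α : Ordinal) (hα : α < Ordinal.omega 1)
    (m k : ℕ → ℕ+) (h1 : ∀ n, m n ≤ k n) (h2 : ∀ n, k n < m (n + 1)) :
    ∀ a : ℕ →₀ ℝ,
      schreierNorm c α (schreierComb k a) ≤ 2 * schreierNorm c α (schreierComb m a) := by
  intro a
  have hm := strictMono_of_interleaved_left h1 h2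
  have hk := strictMono_of_interleaved_right h1 h2
  refine csSup_le ⟨0, ∅, empty_mem_schreier c α, by simp⟩ ?_
  rintro r ⟨E, hE, rfl⟩
  simp only [schreierComb_eq_mapDomain]
  rw [Finsupp.sum_abs_mapDomain hk.injective]
  set N := a.support.filter (k · ∈ E)
  rcases N.eq_empty_or_nonempty with hN | hN
  · rw [hN, sum_empty]
    exact mul_nonneg zero_le_two (schreierNorm_nonneg c α _)
  have hmin : N.min' hN ∈ N := N.min'_mem hN
  rw [← add_sum_erase _ _ hmin, two_mul]
  gcongr ?_ + ?_
  · calc |a (N.min' hN)| = ∑ p ∈ ({N.min' hN} : Finset ℕ).image m, |a.mapDomain m p| := by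
          rw [Finsupp.sum_abs_mapDomain_image hm.injective, sum_singleton]
      _ ≤ _ := sum_abs_le_schreierNorm c α _ (singleton_mem_schreier c hc hα _)
  · calc ∑ n ∈ N.erase (N.min' hN), |a n|
          = ∑ p ∈ (N.erase (N.min' hN)).image m, |a.mapDomain m p| :=
          (Finsupp.sum_abs_mapDomain_image hm.injective _ _).symm
      _ ≤ _ := sum_abs_le_schreierNorm c α _ (image_erase_mem_schreier c h1 h2 hE
          (fun n hn => (mem_filter.mp hn).2) hmin fun n hn => N.min'_le n hn)

end
end

section
/- (Successor step of the Schreier construction preserves the defining properties:) Let S be a family of finite subsets of ℕ which is hereditary, spreading, contains ∅ and all singletons, and contains no strictly ascending chain E_1 ⊊ E_2 ⊊ ⋯ (equivalently, is compact in {0,1}^ℕ). Then the family S' = {E_1 ∪ ⋯ ∪ E_m : m ∈ ℕ, E_1,…,E_m ∈ S nonempty, m ≤ min E_1, and max E_i < min E_{i+1} for 1 ≤ i < m} ∪ {∅} is hereditary, spreading, and contains no strictly ascending chain. -/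
open Filter Topology Metric

noncomputable section


/-- A spreading family: images under strictly increasing maps moving points to the right
stay in the family. -/
def IsSpreadingP (S : Set (Finset ℕ+)) : Prop :=
  ∀ E ∈ S, ∀ f : ℕ+ → ℕ+, StrictMonoOn f (E : Set ℕ+) → (∀ p ∈ E, p ≤ f p) →
    E.image f ∈ S

/-!
Heredity and spreading pass to `schreierSucc S` block by block. For the absence of ascending
chains, call a family precompact if every set all of whose finite subsets lie in it is finite;
for hereditary families this is equivalent to having no strictly ascending chain. An ultrafilter
argument shows that precompactness survives pairwise unions of hereditary families, hence `k`-fold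
unions. A member of `schreierSucc S` containing `u` is a union of at most `u` members of `S`, so
if all finite subsets of `U` lie in `schreierSucc S` and `u ∈ U`, then all finite subsets of `U`
are unions of at most `u` members of `S`, and `U` is finite.
-/

open scoped SetFamily

/-- For a hereditary family `S` this says that the closure of `S` in `{0,1}^α` consists of
(indicators of) finite sets, i.e. `S` is compact. -/
def IsPrecompact {α : Type*} (S : Set (Finset α)) : Prop :=
  ∀ U : Set α, (∀ D : Finset α, ↑D ⊆ U → D ∈ S) → U.Finite

section Families

variable {α : Type*} {S T : Set (Finset α)}

theorem IsPrecompact.of_not_exists_chain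
    (h : ¬∃ E : ℕ → Finset α, (∀ i, E i ∈ S) ∧ ∀ i, E i ⊂ E (i + 1)) : IsPrecompact S := by
  intro U hU
  by_contra hinf
  let g : ℕ ↪ α := (Set.Infinite.natEmbedding U hinf).trans (Function.Embedding.subtype _)
  refine h ⟨fun n => (Finset.range n).map g, fun n => hU _ ?_,
    fun n => Finset.map_ssubset_map.2 (Finset.strictMono_range n.lt_succ_self)⟩
  intro x hx
  obtain ⟨i, -, rfl⟩ := Finset.mem_map.1 hx
  exact (Set.Infinite.natEmbedding U hinf i).2

theorem IsPrecompact.not_exists_chain (hlow : IsLowerSet S) (hS : IsPrecompact S) :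
    ¬∃ E : ℕ → Finset α, (∀ i, E i ∈ S) ∧ ∀ i, E i ⊂ E (i + 1) := by
  rintro ⟨E, hES, hE⟩
  have hmono : StrictMono E := strictMono_nat_of_lt_succ hE
  have hdir : Directed (· ⊆ ·) fun n => (E n : Set α) :=
    Monotone.directed_le fun _ _ h => Finset.coe_subset.2 (hmono.monotone h)
  have hU : (⋃ n, (E n : Set α)).Infinite := fun hfin =>
    Set.infinite_range_of_injective hmono.injective <|
      (hfin.finite_subsets.preimage Finset.coe_injective.injOn).subset <| by
        rintro _ ⟨n, rfl⟩
        exact Set.subset_iUnion (fun n => (E n : Set α)) n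
  refine hU (hS _ fun D hD => ?_)
  obtain ⟨n, hn⟩ := hdir.exists_mem_subset_of_finset_subset_biUnion hD
  exact hlow (Finset.coe_subset.1 hn) (hES n)

theorem IsPrecompact.finite_of_eventually_mem {ι : Type*} {l : Filter ι} [l.NeBot]
    (hlow : IsLowerSet S) (hS : IsPrecompact S) {G : ι → Finset α} (hG : ∀ i, G i ∈ S)
    {V : Set α} (hV : ∀ x ∈ V, ∀ᶠ i in l, x ∈ G i) : V.Finite :=
  hS V fun D hD => by
    obtain ⟨i, hi⟩ := ((eventually_all_finset D).2 fun x hx => hV x (hD hx)).exists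
    exact hlow hi (hG i)

variable [DecidableEq α]

theorem IsLowerSet.finset_sups (hS : IsLowerSet S) (hT : IsLowerSet T) :
    IsLowerSet (S ⊻ T) := by
  intro F E hEF hF
  obtain ⟨B, hB, C, hC, rfl⟩ := Set.mem_sups.1 hF
  exact Set.mem_sups.2 ⟨E ⊓ B, hS inf_le_right hB, E ⊓ C, hT inf_le_right hC,
    by rw [← inf_sup_left, inf_eq_left.2 hEF]⟩

/-- Split each `F ∩ U` as `B F ∪ C F` and follow an ultrafilter refining `atTop` on finite sets:
every point of `U` lies eventually in `B F` or eventually in `C F`, and each of these two sets of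
points is finite by precompactness of `S`, resp. `T`. -/
theorem IsPrecompact.sups (hSl : IsLowerSet S) (hTl : IsLowerSet T) (hS : IsPrecompact S)
    (hT : IsPrecompact T) : IsPrecompact (S ⊻ T) := by
  classical
  intro U hU
  choose B hB C hC hBC using fun F : Finset α =>
    Set.mem_sups.1 (hU (F.filter (· ∈ U)) fun x hx => (Finset.mem_filter.1 hx).2)
  let 𝒰 := Ultrafilter.of (atTop : Filter (Finset α))
  have hmem : ∀ x ∈ U, ∀ᶠ F in (𝒰 : Filter (Finset α)), x ∈ B F ∨ x ∈ C F := fun x hx =>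
    ((eventually_ge_atTop {x}).filter_mono (Ultrafilter.of_le _)).mono fun F hF => by
      rw [← Finset.mem_union, ← Finset.sup_eq_union, hBC, Finset.mem_filter]
      exact ⟨Finset.singleton_subset_iff.1 hF, hx⟩
  let A := {x ∈ U | ∀ᶠ F in (𝒰 : Filter (Finset α)), x ∈ B F}
  have hA : A.Finite := hS.finite_of_eventually_mem hSl hB fun x hx => hx.2
  have hUA : (U \ A).Finite := hT.finite_of_eventually_mem hTl hC fun x hx =>
    ((hmem x hx.1).and (Ultrafilter.eventually_not.2 fun h => hx.2 ⟨hx.1, h⟩)).mono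
      fun F hF => hF.1.resolve_left hF.2
  exact hUA.of_sdiff hA

variable (S) in
def unionsOfAtMost : ℕ → Set (Finset α)
  | 0 => {∅}
  | k + 1 => S ⊻ unionsOfAtMost k

theorem isLowerSet_unionsOfAtMost (hS : IsLowerSet S) : ∀ k, IsLowerSet (unionsOfAtMost S k)
  | 0 => fun _ _ hEF hF => Finset.subset_empty.1 (hF ▸ hEF)
  | k + 1 => hS.finset_sups (isLowerSet_unionsOfAtMost hS k)

theorem isPrecompact_unionsOfAtMost (hS : IsLowerSet S) (hpre : IsPrecompact S) :
    ∀ k, IsPrecompact (unionsOfAtMost S k)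
  | 0 => fun U hU => Set.finite_empty.subset fun x hx =>
      Finset.singleton_ne_empty x (hU {x} (by simpa using hx))
  | k + 1 => hpre.sups hS (isLowerSet_unionsOfAtMost hS k) (isPrecompact_unionsOfAtMost hS hpre k)

theorem unionsOfAtMost_mono (hS : ∅ ∈ S) : Monotone (unionsOfAtMost S) :=
  monotone_nat_of_le_succ fun _ F hF => Set.mem_sups.2 ⟨∅, hS, F, hF, bot_sup_eq F⟩

theorem biUnion_mem_unionsOfAtMost {ι : Type*} [DecidableEq ι] {s : Finset ι}
    {Es : ι → Finset α} (h : ∀ i ∈ s, Es i ∈ S) : s.biUnion Es ∈ unionsOfAtMost S s.card := by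
  induction s using Finset.induction_on with
  | empty => rfl
  | insert a s ha ih =>
    rw [Finset.biUnion_insert, Finset.card_insert_of_notMem ha]
    exact Set.mem_sups.2 ⟨Es a, h a (Finset.mem_insert_self a s), _,
      ih fun i hi => h i (Finset.mem_insert_of_mem hi), rfl⟩

end Families

section Schreier

variable {S : Set (Finset ℕ+)}

theorem mem_schreierSucc_iff {F : Finset ℕ+} :
    F ∈ schreierSucc S ↔ ∃ (m : ℕ) (Es : Fin m → Finset ℕ+), (∀ i, Es i ∈ S) ∧
      (∀ i j, i < j → ∀ p ∈ Es i, ∀ q ∈ Es j, p < q) ∧ (∀ i, ∀ p ∈ Es i, m ≤ (p : ℕ)) ∧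
      F = Finset.univ.biUnion Es := by
  constructor
  · rintro (rfl | ⟨m, hm, Es, hEsS, hne, hord, hfirst, rfl⟩)
    · exact ⟨0, Fin.elim0, fun i => i.elim0, fun i => i.elim0, fun i => i.elim0, by simp⟩
    refine ⟨m, Es, hEsS, hord, fun i p hp => ?_, rfl⟩
    obtain ⟨q, hq⟩ := hne ⟨0, hm⟩
    rcases (show (⟨0, hm⟩ : Fin m) ≤ i from Nat.zero_le _).eq_or_lt with rfl | hlt
    · exact hfirst p hp
    · exact (hfirst q hq).trans (hord _ _ hlt q hq p hp).le
  · rintro ⟨m, Es, hEsS, hord, hbound, rfl⟩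
    classical
    set T := Finset.univ.filter fun i => (Es i).Nonempty
    have hT : T.biUnion Es = Finset.univ.biUnion Es := by
      ext p
      simp only [T, Finset.mem_biUnion, Finset.mem_filter, Finset.mem_univ, true_and]
      exact ⟨fun ⟨i, _, hp⟩ => ⟨i, hp⟩, fun ⟨i, hp⟩ => ⟨i, ⟨p, hp⟩, hp⟩⟩
    rcases T.eq_empty_or_nonempty with hTe | hTne
    · exact Or.inl (by rw [← hT, hTe, Finset.biUnion_empty])
    let g := T.orderEmbOfFin rfl
    refine Or.inr ⟨T.card, hTne.card_pos, Es ∘ g, fun j => hEsS _,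
      fun j => (Finset.mem_filter.1 (T.orderEmbOfFin_mem rfl j)).2,
      fun i j hij => hord _ _ (g.strictMono hij),
      fun p hp => (T.card_le_univ.trans_eq (Fintype.card_fin m)).trans (hbound _ p hp), ?_⟩
    rw [← hT, Function.comp_def, ← Finset.image_biUnion (f := g), T.image_orderEmbOfFin_univ]

theorem isLowerSet_schreierSucc (hS : IsLowerSet S) : IsLowerSet (schreierSucc S) := by
  intro E F hFE hE
  obtain ⟨m, Es, hEsS, hord, hbound, rfl⟩ := mem_schreierSucc_iff.1 hE
  refine mem_schreierSucc_iff.2 ⟨m, fun i => Es i ∩ F,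
    fun i => hS Finset.inter_subset_left (hEsS i),
    fun i j hij p hp q hq => hord i j hij p (Finset.mem_inter.1 hp).1 q (Finset.mem_inter.1 hq).1,
    fun i p hp => hbound i p (Finset.mem_inter.1 hp).1, ?_⟩
  rw [← Finset.biUnion_inter, Finset.inter_eq_right.2 hFE]

theorem isSpreadingP_schreierSucc (hS : IsSpreadingP S) : IsSpreadingP (schreierSucc S) := by
  intro E hE f hf hle
  obtain ⟨m, Es, hEsS, hord, hbound, rfl⟩ := mem_schreierSucc_iff.1 hE
  have hsub : ∀ i, Es i ⊆ Finset.univ.biUnion Es := fun i =>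
    Finset.subset_biUnion_of_mem Es (Finset.mem_univ i)
  refine mem_schreierSucc_iff.2 ⟨m, fun i => (Es i).image f,
    fun i => hS _ (hEsS i) f (hf.mono (Finset.coe_subset.2 (hsub i))) fun p hp => hle p (hsub i hp),
    fun i j hij _ hfp _ hfq => ?_, fun i _ hfp => ?_, Finset.biUnion_image⟩
  · obtain ⟨p, hp, rfl⟩ := Finset.mem_image.1 hfp
    obtain ⟨q, hq, rfl⟩ := Finset.mem_image.1 hfq
    exact hf (hsub i hp) (hsub j hq) (hord i j hij p hp q hq)
  · obtain ⟨p, hp, rfl⟩ := Finset.mem_image.1 hfp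
    exact (hbound i p hp).trans (hle p (hsub i hp))

theorem mem_unionsOfAtMost_of_mem_schreierSucc (hempty : ∅ ∈ S) {F : Finset ℕ+}
    (hF : F ∈ schreierSucc S) {u : ℕ+} (hu : u ∈ F) : F ∈ unionsOfAtMost S u := by
  obtain ⟨m, Es, hEsS, -, hbound, rfl⟩ := mem_schreierSucc_iff.1 hF
  obtain ⟨i, -, hi⟩ := Finset.mem_biUnion.1 hu
  have hm := biUnion_mem_unionsOfAtMost (s := Finset.univ) fun i _ => hEsS i
  rw [Finset.card_univ, Fintype.card_fin] at hm
  exact unionsOfAtMost_mono hempty (hbound i u hi) hm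

theorem isPrecompact_schreierSucc (hS : IsLowerSet S) (hempty : ∅ ∈ S) (hpre : IsPrecompact S) :
    IsPrecompact (schreierSucc S) := by
  intro U hU
  rcases U.eq_empty_or_nonempty with rfl | ⟨u, hu⟩
  · exact Set.finite_empty
  refine isPrecompact_unionsOfAtMost hS hpre u U fun D hD => ?_
  have huD : insert u D ∈ schreierSucc S :=
    hU _ (by simpa [Set.insert_subset_iff] using ⟨hu, hD⟩)
  exact isLowerSet_unionsOfAtMost hS u (Finset.subset_insert u D)
    (mem_unionsOfAtMost_of_mem_schreierSucc hempty huD (Finset.mem_insert_self u D))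

end Schreier

theorem schreierSucc_preserves_properties_general (S : Set (Finset ℕ+))
    (hher : ∀ E ∈ S, ∀ F ⊆ E, F ∈ S)
    (hspread : IsSpreadingP S)
    (hempty : (∅ : Finset ℕ+) ∈ S)
    (hchain : ¬∃ E : ℕ → Finset ℕ+, (∀ i, E i ∈ S) ∧ ∀ i, E i ⊂ E (i + 1)) :
    (∀ E ∈ schreierSucc S, ∀ F ⊆ E, F ∈ schreierSucc S) ∧
    IsSpreadingP (schreierSucc S) ∧
    ¬∃ E : ℕ → Finset ℕ+, (∀ i, E i ∈ schreierSucc S) ∧ ∀ i, E i ⊂ E (i + 1) := by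
  have hS : IsLowerSet S := fun E F hFE hE => hher E hE F hFE
  have hS' := isLowerSet_schreierSucc hS
  exact ⟨fun E hE F hFE => hS' hFE hE, isSpreadingP_schreierSucc hspread,
    (isPrecompact_schreierSucc hS hempty (.of_not_exists_chain hchain)).not_exists_chain hS'⟩

/-- The successor step of the Schreier construction preserves heredity, spreading, and the
absence of strictly ascending chains. -/
theorem schreierSucc_preserves_properties (S : Set (Finset ℕ+))
    (hher : ∀ E ∈ S, ∀ F ⊆ E, F ∈ S)
    (hspread : IsSpreadingP S)
    (hempty : (∅ : Finset ℕ+) ∈ S) (hsing : ∀ n : ℕ+, ({n} : Finset ℕ+) ∈ S)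
    (hchain : ¬∃ E : ℕ → Finset ℕ+, (∀ i, E i ∈ S) ∧ ∀ i, E i ⊂ E (i + 1)) :
    (∀ E ∈ schreierSucc S, ∀ F ⊆ E, F ∈ schreierSucc S) ∧
    IsSpreadingP (schreierSucc S) ∧
    ¬∃ E : ℕ → Finset ℕ+, (∀ i, E i ∈ schreierSucc S) ∧ ∀ i, E i ⊂ E (i + 1) :=
  schreierSucc_preserves_properties_general S hher hspread hempty hchain

end
end

section
/- (Proposition of Section 6, operator norm version of upper block estimates:) Let V be a Banach space with a normalized 1-unconditional basis (v_n), let C ≥ 1, and let X and E be Banach spaces where E has an FDD (E_n) (with coordinate projections Q_n) satisfying subsequential C-V-upper block estimates in E. Let ℓ ∈ ℕ, let 1 = k_0 < k_1 < ⋯ < k_ℓ be natural numbers, and let u_1, …, u_ℓ : X → E be bounded linear operators such that the range of u_n is contained in E_{k_{n-1}} ⊕ ⋯ ⊕ E_{k_n − 1} (equivalently Q_{[k_{n-1}, k_n − 1]} ∘ u_n = u_n) for each n. Then ‖Σ_{n=1}^ℓ u_n‖ ≤ C ‖Σ_{n=1}^ℓ ‖u_n‖ · v_{k_{n-1}}‖_V,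 where the left-hand side is the operator norm. -/
open Filter Topology Metric

noncomputable section

/-! ### Schauder bases -/

/-- A Schauder basis of `V`, bundled with its (automatically continuous) coordinate
functionals. -/
structure SchauderBasis' (V : Type*) [NormedAddCommGroup V] [NormedSpace ℝ V] where
  v : ℕ → V
  coord : ℕ → V →L[ℝ] ℝ
  biorth : ∀ n m, coord n (v m) = if n = m then (1 : ℝ) else 0
  expand : ∀ x : V,
    Filter.Tendsto (fun N => ∑ n ∈ Finset.range N, coord n x • v n) Filter.atTop (nhds x)

namespace SchauderBasis'

variable {V : Type*} [NormedAddCommGroup V] [NormedSpace ℝ V] (B : SchauderBasis' V)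

/-- The vector `Σ_n a_n v_n` for finitely supported coefficients. -/
def vec (a : ℕ →₀ ℝ) : V := a.sum fun n r => r • B.v n

/-- The basis is normalized. -/
def Normalized : Prop := ∀ n, ‖B.v n‖ = 1

/-- The basis is `1`-unconditional. -/
def Unconditional : Prop :=
  ∀ a b : ℕ →₀ ℝ, (∀ n, |a n| ≤ |b n|) → ‖B.vec a‖ ≤ ‖B.vec b‖

/-- The basis is shrinking. -/
def Shrinking : Prop :=
  ∀ f : V →L[ℝ] ℝ,
    Filter.Tendsto
      (fun N => sSup {r : ℝ | ∃ x ∈ closure (Submodule.span ℝ (B.v '' Set.Ici N) : Set V),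
        ‖x‖ ≤ 1 ∧ r = |f x|})
      Filter.atTop (nhds 0)

/-- `D`-right dominance. -/
def RightDominant (D : ℝ) : Prop :=
  ∀ k l : ℕ → ℕ, StrictMono k → StrictMono l → (∀ n, k n ≤ l n) →
    DominatedBy D (fun n => B.v (k n)) fun n => B.v (l n)


/-- The basis satisfies subsequential `C`-`V`-upper block estimates in `V` itself. -/
def UpperBlockEstSelf (C : ℝ) : Prop :=
  ∀ a : ℕ → ℕ →₀ ℝ, ∀ h : IsCoeffBlockSeq a, (∀ n, ‖B.vec (a n)‖ = 1) →
    DominatedBy C (fun n => B.vec (a n)) fun n =>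
      B.v ((a n).support.min' (Finsupp.support_nonempty_iff.mpr (h.1 n)))

/-- The basis satisfies subsequential `C`-`V`-lower block estimates in `V` itself. -/
def LowerBlockEstSelf (C : ℝ) : Prop :=
  ∀ a : ℕ → ℕ →₀ ℝ, ∀ h : IsCoeffBlockSeq a, (∀ n, ‖B.vec (a n)‖ = 1) →
    DominatedBy C
      (fun n => B.v ((a n).support.min' (Finsupp.support_nonempty_iff.mpr (h.1 n))))
      fun n => B.vec (a n)

end SchauderBasis'

/-!
For a unit vector `x`, the vectors `u n x` form a finite family with `u n x` supported in
`[k n, k (n + 1))`. Two modifications turn it into a normalized block sequence whose supports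
start exactly at the `k n`: each `u n x` is moved by at most `δ` so that `k n` enters its support,
and the family is padded with unit vectors of later coordinates. The upper block estimate and
`1`-unconditionality then bound `‖∑ u n x‖` by `ℓ δ + C ‖∑ (‖u n‖ + δ) v (k n)‖`; let `δ → 0`.
-/

namespace FDD

variable {Z : Type*} [NormedAddCommGroup Z] [NormedSpace ℝ Z] (F : FDD Z)

theorem proj_of_mem {m : ℕ} {w : Z} (hw : w ∈ F.E m) (n : ℕ) :
    F.proj n w = if n = m then w else 0 := by
  refine (F.rep_unique w (fun i => if i = m then w else 0) (fun i => ?_) ?_ n).symm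
  · split_ifs with h
    · exact h ▸ hw
    · exact zero_mem _
  · refine tendsto_atTop_of_eventually_const (i₀ := m + 1) fun N hN => ?_
    simp [Finset.sum_ite_eq', Nat.lt_of_succ_le hN]

theorem exists_mem_norm_eq_one (m : ℕ) : ∃ e ∈ F.E m, ‖e‖ = 1 := by
  obtain ⟨x, hx, hx0⟩ := (Submodule.ne_bot_iff _).mp (F.nontrivial m)
  exact ⟨‖x‖⁻¹ • x, Submodule.smul_mem _ _ hx, norm_smul_inv_norm hx0⟩

theorem supp_of_mem {m : ℕ} {w : Z} (hw : w ∈ F.E m) (hw0 : w ≠ 0) : F.supp w = {m} := by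
  ext n
  simp [supp, F.proj_of_mem hw, hw0]

theorem supp_smul {c : ℝ} (hc : c ≠ 0) (z : Z) : F.supp (c • z) = F.supp z := by
  ext n
  simp [supp, hc]

theorem supp_add_subset (y z : Z) : F.supp (y + z) ⊆ F.supp y ∪ F.supp z := by
  intro n hn
  by_contra h
  simp_all [supp]

theorem ne_zero_of_mem_supp {z : Z} {m : ℕ} (hm : m ∈ F.supp z) : z ≠ 0 := by
  rintro rfl
  simp [supp] at hm

theorem supp_subset_of_sum_proj {s : Finset ℕ} {z : Z} (hz : ∑ i ∈ s, F.proj i z = z) :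
    F.supp z ⊆ s := by
  intro j hj
  by_contra hjs
  apply hj
  rw [← hz, map_sum]
  refine Finset.sum_eq_zero fun i hi => ?_
  rw [F.proj_of_mem (F.proj_mem i z), if_neg (ne_of_mem_of_not_mem hi hjs).symm]

theorem isBlockSeq_of_supp_subset_Ico {z : ℕ → Z} (hz : ∀ n, z n ≠ 0) (K : ℕ → ℕ)
    (hK : ∀ n, F.supp (z n) ⊆ Set.Ico (K n) (K (n + 1))) : F.IsBlockSeq z :=
  ⟨hz, fun n => (Set.finite_Ico _ _).subset (hK n),
    fun n _ hi _ hj => (hK n hi).2.trans_le (hK (n + 1) hj).1⟩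

theorem exists_norm_sub_le_mem_supp (z : Z) (m : ℕ) {δ : ℝ} (hδ : 0 < δ) :
    ∃ y, ‖y - z‖ ≤ δ ∧ m ∈ F.supp y ∧ F.supp y ⊆ insert m (F.supp z) := by
  by_cases hz : m ∈ F.supp z
  · exact ⟨z, by simp [hδ.le], hz, Set.subset_insert _ _⟩
  obtain ⟨e, he, he1⟩ := F.exists_mem_norm_eq_one m
  have he0 : e ≠ 0 := norm_ne_zero_iff.mp (by rw [he1]; exact one_ne_zero)
  have hproj_z : F.proj m z = 0 := by simpa [supp] using hz
  refine ⟨z + δ • e, by simp [norm_smul, he1, abs_of_pos hδ], ?_, ?_⟩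
  · simp [supp, hproj_z, F.proj_of_mem he, hδ.ne', he0]
  · refine (F.supp_add_subset _ _).trans ?_
    rw [F.supp_smul hδ.ne', F.supp_of_mem he he0, Set.union_singleton]

end FDD

theorem Finsupp.sum_finset_sum_single_smul {ι R M : Type*} [Semiring R] [AddCommMonoid M]
    [Module R M] (s : Finset ι) (k : ι → ℕ) (c : ι → R) (x : ℕ → M) :
    (∑ i ∈ s, Finsupp.single (k i) (c i)).sum (fun n r => r • x n) = ∑ i ∈ s, c i • x (k i) := by
  simp only [← Finsupp.linearCombination_apply, map_sum, Finsupp.linearCombination_single]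

theorem FDD.UpperBlockEst.norm_sum_le_of_mem_supp {Z V : Type*} [NormedAddCommGroup Z]
    [NormedSpace ℝ Z] [NormedAddCommGroup V] [Module ℝ V] {F : FDD Z} {w : ℕ → V} {C : ℝ}
    (hup : F.UpperBlockEst w C) (ℓ : ℕ) (k : ℕ → ℕ) (y : ℕ → Z)
    (hmem : ∀ n < ℓ, k n ∈ F.supp (y n))
    (hsupp : ∀ n < ℓ, F.supp (y n) ⊆ Set.Ico (k n) (k (n + 1))) :
    ‖∑ n ∈ Finset.range ℓ, y n‖ ≤ C * ‖∑ n ∈ Finset.range ℓ, ‖y n‖ • w (k n)‖ := by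
  choose e he he1 using F.exists_mem_norm_eq_one
  have hy0 : ∀ n < ℓ, ‖y n‖ ≠ 0 := fun n hn =>
    norm_ne_zero_iff.mpr (F.ne_zero_of_mem_supp (hmem n hn))
  set b : ℕ → Z := fun n => if n < ℓ then ‖y n‖⁻¹ • y n else e (k ℓ + n) with hb
  have hb1 : ∀ n, ‖b n‖ = 1 := by
    intro n
    by_cases hn : n < ℓ
    · simp only [hb, if_pos hn, norm_smul, norm_inv, norm_norm, inv_mul_cancel₀ (hy0 n hn)]
    · simp only [hb, if_neg hn, he1]
  have hb0 : ∀ n, b n ≠ 0 := fun n => norm_ne_zero_iff.mp (by rw [hb1]; exact one_ne_zero)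
  have hb_supp : ∀ n < ℓ, F.supp (b n) = F.supp (y n) := fun n hn => by
    simp only [hb, if_pos hn]
    exact F.supp_smul (inv_ne_zero (hy0 n hn)) _
  have hblock : F.IsBlockSeq b := by
    refine F.isBlockSeq_of_supp_subset_Ico hb0 (fun n => if n ≤ ℓ then k n else k ℓ + n)
      fun n => ?_
    by_cases hn : n < ℓ
    · rw [hb_supp n hn, if_pos hn.le, if_pos (Nat.succ_le_of_lt hn)]
      exact hsupp n hn
    · have he0 : e (k ℓ + n) ≠ 0 := norm_ne_zero_iff.mp (by rw [he1]; exact one_ne_zero)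
      have : F.supp (b n) = {k ℓ + n} := by
        simp only [hb, if_neg hn]
        exact F.supp_of_mem (he _) he0
      rw [this, Set.singleton_subset_iff, if_neg (show ¬n + 1 ≤ ℓ by omega), Set.mem_Ico]
      split_ifs with h
      · obtain rfl : n = ℓ := by omega
        omega
      · omega
  have hmin : ∀ n < ℓ, F.minSupp (b n) = k n := fun n hn =>
    IsLeast.csInf_eq ⟨hb_supp n hn ▸ hmem n hn, fun i hi => (hsupp n hn (hb_supp n hn ▸ hi)).1⟩
  have hest := hup b hblock hb1 (∑ n ∈ Finset.range ℓ, Finsupp.single n ‖y n‖)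
  have hsum_b : ∑ n ∈ Finset.range ℓ, ‖y n‖ • b n = ∑ n ∈ Finset.range ℓ, y n :=
    Finset.sum_congr rfl fun n hn => by
      rw [Finset.mem_range] at hn
      simp only [hb, if_pos hn, smul_smul, mul_inv_cancel₀ (hy0 n hn), one_smul]
  have hsum_w : ∑ n ∈ Finset.range ℓ, ‖y n‖ • w (F.minSupp (b n)) =
      ∑ n ∈ Finset.range ℓ, ‖y n‖ • w (k n) :=
    Finset.sum_congr rfl fun n hn => by rw [hmin n (Finset.mem_range.mp hn)]
  simpa only [Finsupp.sum_finset_sum_single_smul, hsum_b, hsum_w] using hest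

theorem SchauderBasis'.Unconditional.norm_sum_smul_le {V ι : Type*} [NormedAddCommGroup V]
    [NormedSpace ℝ V] {B : SchauderBasis' V} (hU : B.Unconditional) (s : Finset ι) (k : ι → ℕ)
    {c d : ι → ℝ} (hc : ∀ i ∈ s, 0 ≤ c i) (hcd : ∀ i ∈ s, c i ≤ d i) :
    ‖∑ i ∈ s, c i • B.v (k i)‖ ≤ ‖∑ i ∈ s, d i • B.v (k i)‖ := by
  simp only [← Finsupp.sum_finset_sum_single_smul]
  refine hU _ _ fun m => ?_
  have h : ∀ i ∈ s, 0 ≤ Finsupp.single (k i) (c i) m ∧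
      Finsupp.single (k i) (c i) m ≤ Finsupp.single (k i) (d i) m := fun i hi => by
    simp only [Finsupp.single_apply]
    split_ifs <;> simp [hc i hi, hcd i hi]
  simp only [Finsupp.finsetSum_apply]
  rw [abs_of_nonneg (Finset.sum_nonneg fun i hi => (h i hi).1),
    abs_of_nonneg (Finset.sum_nonneg fun i hi => (h i hi).1.trans (h i hi).2)]
  exact Finset.sum_le_sum fun i hi => (h i hi).2

section UnconditionalBasis

variable {Z V : Type*} [NormedAddCommGroup Z] [NormedSpace ℝ Z] [NormedAddCommGroup V]
  [NormedSpace ℝ V] {F : FDD Z} {B : SchauderBasis' V} {C : ℝ}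

theorem FDD.UpperBlockEst.norm_sum_le_add_of_supp_subset (hup : F.UpperBlockEst B.v C)
    (hU : B.Unconditional) (hC : 0 ≤ C) (ℓ : ℕ) (k : ℕ → ℕ) (hk : ∀ n < ℓ, k n < k (n + 1))
    (z : ℕ → Z) (hz : ∀ n < ℓ, F.supp (z n) ⊆ Set.Ico (k n) (k (n + 1))) {δ : ℝ} (hδ : 0 < δ) :
    ‖∑ n ∈ Finset.range ℓ, z n‖ ≤
      ℓ * δ + C * ‖∑ n ∈ Finset.range ℓ, (‖z n‖ + δ) • B.v (k n)‖ := by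
  choose y hyz hmem hsub using fun n => F.exists_norm_sub_le_mem_supp (z n) (k n) hδ
  have hy_supp : ∀ n < ℓ, F.supp (y n) ⊆ Set.Ico (k n) (k (n + 1)) := fun n hn =>
    (hsub n).trans (Set.insert_subset (Set.left_mem_Ico.mpr (hk n hn)) (hz n hn))
  have hy_norm : ∀ n, ‖y n‖ ≤ ‖z n‖ + δ := fun n =>
    (norm_le_norm_add_norm_sub' (y n) (z n)).trans (by linarith [hyz n])
  have hzy : ‖∑ n ∈ Finset.range ℓ, (z n - y n)‖ ≤ ℓ * δ := by
    refine (norm_sum_le _ _).trans ?_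
    simpa using Finset.sum_le_sum fun n (_ : n ∈ Finset.range ℓ) =>
      (norm_sub_rev (z n) (y n)).trans_le (hyz n)
  calc ‖∑ n ∈ Finset.range ℓ, z n‖
      ≤ ‖∑ n ∈ Finset.range ℓ, y n‖ + ‖∑ n ∈ Finset.range ℓ, (z n - y n)‖ := by
        rw [Finset.sum_sub_distrib]
        exact norm_le_norm_add_norm_sub' _ _
    _ ≤ C * ‖∑ n ∈ Finset.range ℓ, ‖y n‖ • B.v (k n)‖ + ℓ * δ :=
        add_le_add (hup.norm_sum_le_of_mem_supp ℓ k y (fun n _ => hmem n) hy_supp) hzy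
    _ ≤ C * ‖∑ n ∈ Finset.range ℓ, (‖z n‖ + δ) • B.v (k n)‖ + ℓ * δ := by
        gcongr
        exact hU.norm_sum_smul_le _ _ (fun n _ => norm_nonneg _) fun n _ => hy_norm n
    _ = _ := add_comm _ _

theorem FDD.UpperBlockEst.norm_sum_le_of_supp_subset (hup : F.UpperBlockEst B.v C)
    (hU : B.Unconditional) (hC : 0 ≤ C) (ℓ : ℕ) (k : ℕ → ℕ) (hk : ∀ n < ℓ, k n < k (n + 1))
    (z : ℕ → Z) (hz : ∀ n < ℓ, F.supp (z n) ⊆ Set.Ico (k n) (k (n + 1))) :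
    ‖∑ n ∈ Finset.range ℓ, z n‖ ≤ C * ‖∑ n ∈ Finset.range ℓ, ‖z n‖ • B.v (k n)‖ := by
  have hlim : Tendsto (fun δ : ℝ => ℓ * δ + C * ‖∑ n ∈ Finset.range ℓ, (‖z n‖ + δ) • B.v (k n)‖)
      (𝓝[>] 0) (𝓝 (C * ‖∑ n ∈ Finset.range ℓ, ‖z n‖ • B.v (k n)‖)) := by
    have hcont : Continuous fun δ : ℝ =>
        ℓ * δ + C * ‖∑ n ∈ Finset.range ℓ, (‖z n‖ + δ) • B.v (k n)‖ := by
      fun_prop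
    simpa using (hcont.tendsto 0).mono_left nhdsWithin_le_nhds
  exact ge_of_tendsto hlim (eventually_nhdsWithin_of_forall fun δ hδ =>
    hup.norm_sum_le_add_of_supp_subset hU hC ℓ k hk z hz hδ)

end UnconditionalBasis

theorem operator_upper_block_estimate_general
    {V : Type*} [NormedAddCommGroup V] [NormedSpace ℝ V]
    (B : SchauderBasis' V) (hU : B.Unconditional)
    (C : ℝ) (hC : 1 ≤ C)
    {X E : Type*} [NormedAddCommGroup X] [NormedSpace ℝ X]
    [NormedAddCommGroup E] [NormedSpace ℝ E]
    (F : FDD E) (hup : F.UpperBlockEst B.v C)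
    (ℓ : ℕ) (k : ℕ → ℕ) (hk : ∀ n < ℓ, k n < k (n + 1))
    (u : ℕ → X →L[ℝ] E)
    (hu : ∀ n < ℓ, ∀ x : X,
      (∑ i ∈ Finset.Ico (k n) (k (n + 1)), F.proj i (u n x)) = u n x) :
    ‖∑ n ∈ Finset.range ℓ, u n‖ ≤ C * ‖∑ n ∈ Finset.range ℓ, ‖u n‖ • B.v (k n)‖ := by
  have hC0 : 0 ≤ C := zero_le_one.trans hC
  refine ContinuousLinearMap.opNorm_le_of_unit_norm (by positivity) fun x hx => ?_
  have hux : ∀ n, ‖u n x‖ ≤ ‖u n‖ := fun n => by simpa [hx] using (u n).le_opNorm x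
  have hsupp : ∀ n < ℓ, F.supp (u n x) ⊆ Set.Ico (k n) (k (n + 1)) := fun n hn => by
    simpa using F.supp_subset_of_sum_proj (hu n hn x)
  calc ‖(∑ n ∈ Finset.range ℓ, u n) x‖ = ‖∑ n ∈ Finset.range ℓ, u n x‖ := by
        rw [sum_apply]
    _ ≤ C * ‖∑ n ∈ Finset.range ℓ, ‖u n x‖ • B.v (k n)‖ :=
        hup.norm_sum_le_of_supp_subset hU hC0 ℓ k hk _ hsupp
    _ ≤ C * ‖∑ n ∈ Finset.range ℓ, ‖u n‖ • B.v (k n)‖ := by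
        gcongr 1
        exact hU.norm_sum_smul_le _ _ (fun n _ => norm_nonneg _) fun n _ => hux n

/-- Operator-norm version of upper block estimates (Section 6). -/
theorem operator_upper_block_estimate
    {V : Type*} [NormedAddCommGroup V] [NormedSpace ℝ V] [CompleteSpace V]
    (B : SchauderBasis' V) (hN : B.Normalized) (hU : B.Unconditional)
    (C : ℝ) (hC : 1 ≤ C)
    {X E : Type*} [NormedAddCommGroup X] [NormedSpace ℝ X] [CompleteSpace X]
    [NormedAddCommGroup E] [NormedSpace ℝ E] [CompleteSpace E]
    (F : FDD E) (hup : F.UpperBlockEst B.v C)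
    (ℓ : ℕ) (k : ℕ → ℕ) (hk0 : k 0 = 0) (hk : ∀ n < ℓ, k n < k (n + 1))
    (u : ℕ → X →L[ℝ] E)
    (hu : ∀ n < ℓ, ∀ x : X,
      (∑ i ∈ Finset.Ico (k n) (k (n + 1)), F.proj i (u n x)) = u n x) :
    ‖∑ n ∈ Finset.range ℓ, u n‖ ≤ C * ‖∑ n ∈ Finset.range ℓ, ‖u n‖ • B.v (k n)‖ :=
  operator_upper_block_estimate_general B hU C hC F hup ℓ k hk u hu

end
end
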